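/- arXiv:1102.1265 — 8 statements merged into one kernel-verified Lean document; each statement's English description precedes it below -/
import Mathlib

section
/- Let E = {d ∈ ℝⁿ : ‖c - D d‖ ≤ ξ} be an ellipsoidal set with D ∈ ℝ^{n×n}, c ∈ ℝⁿ, ξ > 0, and let B = {d ∈ ℝⁿ : |d_i| ≤ η for all i} be a hypercube with η > 0. Then the number of integer points in E ∩ B is at most ∏_{i=1}^n [√n + min(2ξ/σ_i(D), 2√n η)], where σ_1(D) ≤ ... ≤ σ_n(D) are the singular values of D. -/
open Matrix MeasureTheory
open scoped ENNReal

set_option maxHeartbeats 2000000 in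
/-- Lemma 1 (upper bound): the number of integer points in the intersection of the
ellipsoid `{d | ‖c - D d‖ ≤ ξ}` and the hypercube `{d | |d_i| ≤ η}` is at most
`∏ i, (√n + min (2ξ/σ_i(D)) (2√n η))`, where `σ_1(D) ≤ ... ≤ σ_n(D)` are the
singular values of `D` (with the convention that a zero singular value gives `2√n η`). -/
theorem stmt0 (n : ℕ) (hn : 1 ≤ n) (D : Matrix (Fin n) (Fin n) ℝ) (c : Fin n → ℝ)
    (ξ η : ℝ) (hξ : 0 < ξ) (hη : 0 < η)
    (σ : Fin n → ℝ) (hmono : Monotone σ) (hnn : ∀ i, 0 ≤ σ i)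
    (U V : Matrix (Fin n) (Fin n) ℝ) (hU : Uᵀ * U = 1) (hV : Vᵀ * V = 1)
    (hsvd : D = U * Matrix.diagonal σ * Vᵀ) :
    ((Set.ncard {d : Fin n → ℝ | (∀ i, ∃ z : ℤ, d i = (z : ℝ)) ∧
        Real.sqrt (∑ i, (c i - D.mulVec d i) ^ 2) ≤ ξ ∧ (∀ i, |d i| ≤ η)} : ℕ) : ℝ)
      ≤ ∏ i, (Real.sqrt n +
          (if σ i = 0 then 2 * Real.sqrt n * η
           else min (2 * ξ / σ i) (2 * Real.sqrt n * η))) := by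
  classical
  have hVV : V * Vᵀ = 1 := mul_eq_one_comm.mp hV
  have hUU : U * Uᵀ = 1 := mul_eq_one_comm.mp hU
  set s : ℝ := Real.sqrt n with hs
  have hs0 : 0 ≤ s := Real.sqrt_nonneg _
  have hssq : s ^ 2 = n := Real.sq_sqrt (Nat.cast_nonneg n)
  set S : Set (Fin n → ℝ) := {d : Fin n → ℝ | (∀ i, ∃ z : ℤ, d i = (z : ℝ)) ∧
        Real.sqrt (∑ i, (c i - D.mulVec d i) ^ 2) ≤ ξ ∧ (∀ i, |d i| ≤ η)} with hS
  set b : Fin n → ℝ := Uᵀ *ᵥ c with hb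
  set α : Fin n → ℝ := fun i => if σ i = 0 then -(s*η) else max ((b i - ξ)/σ i) (-(s*η)) with hα
  set β : Fin n → ℝ := fun i => if σ i = 0 then s*η else min ((b i + ξ)/σ i) (s*η) with hβ
  set L : Fin n → ℝ := fun i => if σ i = 0 then 2*s*η else min (2*ξ/σ i) (2*s*η) with hLdef
  have hσpos : ∀ i, σ i ≠ 0 → 0 < σ i := fun i h => lt_of_le_of_ne (hnn i) (Ne.symm h)
  have hL0 : ∀ i, 0 ≤ L i := by
    intro i
    rw [hLdef]
    by_cases h : σ i = 0
    · simp only [h, if_true]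
      have : (0:ℝ) ≤ 2*s*η := by positivity
      linarith
    · simp only [h, if_false]
      exact le_min (div_nonneg (by positivity) (hσpos i h).le) (by positivity)
  have hβα : ∀ i, β i - α i ≤ L i := by
    intro i
    rw [hα, hβ, hLdef]
    by_cases h : σ i = 0
    · simp only [h, if_true]; ring_nf; nlinarith
    · simp only [h, if_false]
      have hσ := hσpos i h
      refine le_min ?_ ?_
      · have h1 : (b i + ξ)/σ i ⊓ (s*η) ≤ (b i + ξ)/σ i := min_le_left _ _
        have h2 : (b i - ξ)/σ i ≤ (b i - ξ)/σ i ⊔ (-(s*η)) := le_max_left _ _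
        have h3 : (b i + ξ)/σ i - (b i - ξ)/σ i = 2*ξ/σ i := by
          field_simp
          ring
        linarith
      · have h1 : (b i + ξ)/σ i ⊓ (s*η) ≤ s*η := min_le_right _ _
        have h2 : (-(s*η)) ≤ (b i - ξ)/σ i ⊔ (-(s*η)) := le_max_right _ _
        linarith
  -- key coordinate bounds for points of S
  have hw : ∀ d ∈ S, ∀ i, α i ≤ (Vᵀ *ᵥ d) i ∧ (Vᵀ *ᵥ d) i ≤ β i := by
    intro d hd i
    obtain ⟨hd1, hd2, hd3⟩ := hd
    have h1 : (Vᵀ *ᵥ d) ⬝ᵥ (Vᵀ *ᵥ d) = d ⬝ᵥ d := by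
      rw [Matrix.dotProduct_mulVec, Matrix.vecMul_transpose, Matrix.mulVec_mulVec, hVV,
        Matrix.one_mulVec]
    have hsum : ∑ j, (Vᵀ *ᵥ d) j ^ 2 = ∑ j, d j ^ 2 := by
      simpa [dotProduct, pow_two] using h1
    have hd2' : ∑ j, d j ^ 2 ≤ (n : ℝ) * η ^ 2 := by
      calc ∑ j, d j ^ 2 ≤ ∑ _j : Fin n, η ^ 2 := by
            refine Finset.sum_le_sum fun j _ => ?_
            nlinarith [neg_le_of_abs_le (hd3 j), le_of_abs_le (hd3 j)]
        _ = (n : ℝ) * η ^ 2 := by simp [Finset.sum_const, Finset.card_univ]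
    have hwb : |(Vᵀ *ᵥ d) i| ≤ s * η := by
      have h2 : (Vᵀ *ᵥ d) i ^ 2 ≤ ∑ j, (Vᵀ *ᵥ d) j ^ 2 :=
        Finset.single_le_sum (f := fun j => (Vᵀ *ᵥ d) j ^ 2) (fun j _ => sq_nonneg _)
          (Finset.mem_univ i)
      have h3 : (Vᵀ *ᵥ d) i ^ 2 ≤ (s * η) ^ 2 := by
        rw [hsum] at h2
        nlinarith
      calc |(Vᵀ *ᵥ d) i| = Real.sqrt ((Vᵀ *ᵥ d) i ^ 2) := (Real.sqrt_sq_eq_abs _).symm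
        _ ≤ Real.sqrt ((s * η) ^ 2) := Real.sqrt_le_sqrt h3
        _ = s * η := Real.sqrt_sq (by positivity)
    have hsq : ∑ j, (c j - (D *ᵥ d) j) ^ 2 ≤ ξ ^ 2 := by
      have h0 : 0 ≤ ∑ j, (c j - (D *ᵥ d) j) ^ 2 := Finset.sum_nonneg fun j _ => sq_nonneg _
      nlinarith [Real.sq_sqrt h0, Real.sqrt_nonneg (∑ j, (c j - (D *ᵥ d) j) ^ 2)]
    have hvec : c - D *ᵥ d = U *ᵥ (b - Matrix.diagonal σ *ᵥ (Vᵀ *ᵥ d)) := by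
      rw [Matrix.mulVec_sub, hb, Matrix.mulVec_mulVec, hUU, Matrix.one_mulVec,
        Matrix.mulVec_mulVec, Matrix.mulVec_mulVec, ← hsvd]
    have hU2 : ∑ j, (c j - (D *ᵥ d) j) ^ 2
        = ∑ j, (b j - σ j * (Vᵀ *ᵥ d) j) ^ 2 := by
      have h4 : (c - D *ᵥ d) ⬝ᵥ (c - D *ᵥ d)
          = (b - Matrix.diagonal σ *ᵥ (Vᵀ *ᵥ d)) ⬝ᵥ (b - Matrix.diagonal σ *ᵥ (Vᵀ *ᵥ d)) := by
        rw [hvec, Matrix.dotProduct_mulVec, ← Matrix.mulVec_transpose, Matrix.mulVec_mulVec,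
          hU, Matrix.one_mulVec]
      simpa only [dotProduct, Pi.sub_apply, Matrix.mulVec_diagonal, pow_two] using h4
    by_cases hσi : σ i = 0
    · constructor
      · rw [hα]
        simp only [hσi, if_true]
        linarith [neg_le_of_abs_le hwb]
      · rw [hβ]
        simp only [hσi, if_true]
        exact le_of_abs_le hwb
    · have hσ := hσpos i hσi
      have h5 : (b i - σ i * (Vᵀ *ᵥ d) i) ^ 2 ≤ ξ ^ 2 := by
        refine le_trans ?_ (hU2 ▸ hsq)
        exact Finset.single_le_sum (f := fun j => (b j - σ j * (Vᵀ *ᵥ d) j) ^ 2)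
          (fun j _ => sq_nonneg _) (Finset.mem_univ i)
      have h6 : |b i - σ i * (Vᵀ *ᵥ d) i| ≤ ξ := by
        calc |b i - σ i * (Vᵀ *ᵥ d) i|
            = Real.sqrt ((b i - σ i * (Vᵀ *ᵥ d) i) ^ 2) := (Real.sqrt_sq_eq_abs _).symm
          _ ≤ Real.sqrt (ξ ^ 2) := Real.sqrt_le_sqrt h5
          _ = ξ := Real.sqrt_sq hξ.le
      have h7 := le_of_abs_le h6
      have h8 := neg_le_of_abs_le h6
      have hcm : σ i * (Vᵀ *ᵥ d) i = (Vᵀ *ᵥ d) i * σ i := mul_comm _ _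
      constructor
      · rw [hα]
        simp only [hσi, if_false]
        refine max_le ?_ (neg_le_of_abs_le hwb)
        rw [div_le_iff₀ hσ]
        linarith
      · rw [hβ]
        simp only [hσi, if_false]
        refine le_min ?_ (le_of_abs_le hwb)
        rw [le_div_iff₀ hσ]
        linarith
  have hfin : S.Finite := by
    have hsub : S ⊆ (fun z : Fin n → ℤ => fun i => ((z i : ℤ) : ℝ)) ''
        (Set.pi Set.univ fun _ => Set.Icc (-⌈η⌉) ⌈η⌉) := by
      rintro d ⟨h1, _h2, h3⟩
      choose z hz using h1
      refine ⟨z, fun i _ => ?_, funext fun i => (hz i).symm⟩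
      have hdi := h3 i
      rw [hz i] at hdi
      have hup : ((z i : ℤ) : ℝ) ≤ (⌈η⌉ : ℝ) :=
        le_trans (le_of_abs_le hdi) (le_trans (Int.le_ceil η) (by norm_num))
      have hlo : ((-⌈η⌉ : ℤ) : ℝ) ≤ ((z i : ℤ) : ℝ) := by
        push_cast
        have := neg_le_of_abs_le hdi
        linarith [Int.le_ceil η]
      exact Set.mem_Icc.mpr ⟨by exact_mod_cast hlo, by exact_mod_cast hup⟩
    exact Set.Finite.subset (Set.Finite.image _ (Set.Finite.pi fun _ => Set.finite_Icc _ _)) hsub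
  have hcount : ((S.ncard : ℕ) : ℝ≥0∞) ≤ ∏ i, ENNReal.ofReal (β i - α i + s) := by
    set T : Finset (Fin n → ℝ) := hfin.toFinset with hT
    have hmemT : ∀ d, d ∈ T ↔ d ∈ S := fun d => hfin.mem_toFinset
    set cube : (Fin n → ℝ) → Set (Fin n → ℝ) :=
      fun d => Set.pi Set.univ fun i => Set.Ico (d i) (d i + 1) with hcube
    have hvolcube : ∀ d, volume (cube d) = 1 := by
      intro d
      rw [hcube]
      rw [volume_pi_pi]
      simp [Real.volume_Ico]
    have hmeas : ∀ d : Fin n → ℝ, MeasurableSet (cube d) := fun d =>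
      MeasurableSet.univ_pi fun i => measurableSet_Ico
    have hdisj : (T : Set (Fin n → ℝ)).PairwiseDisjoint cube := by
      intro d hd e he hde
      rw [Finset.mem_coe, hmemT] at hd he
      obtain ⟨i, hi⟩ := Function.ne_iff.mp hde
      obtain ⟨zd, hzd⟩ := hd.1 i
      obtain ⟨ze, hze⟩ := he.1 i
      have hzz : zd ≠ ze := by rintro rfl; exact hi (hzd.trans hze.symm)
      show Disjoint (cube d) (cube e)
      rw [Set.disjoint_left]
      intro x hxd hxe
      have h1 := hxd i (Set.mem_univ i)
      have h2 := hxe i (Set.mem_univ i)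
      simp only [Set.mem_Ico] at h1 h2
      rw [hzd] at h1
      rw [hze] at h2
      rcases lt_or_gt_of_ne hzz with h | h
      · have h3 : (zd : ℝ) + 1 ≤ (ze : ℝ) := by exact_mod_cast Int.add_one_le_iff.mpr h
        linarith [h1.1, h1.2, h2.1, h2.2]
      · have h3 : (ze : ℝ) + 1 ≤ (zd : ℝ) := by exact_mod_cast Int.add_one_le_iff.mpr h
        linarith [h1.1, h1.2, h2.1, h2.2]
    have hvolU : volume (⋃ d ∈ T, cube d) = T.card := by
      rw [measure_biUnion_finset hdisj fun d _ => hmeas d]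
      simp [hvolcube]
    set f : (Fin n → ℝ) →ₗ[ℝ] (Fin n → ℝ) := Matrix.toLin' Vᵀ with hf
    have hdet : ENNReal.ofReal |LinearMap.det f| = 1 := by
      rw [hf, LinearMap.det_toLin']
      have h1 : Vᵀ.det * V.det = 1 := by rw [← Matrix.det_mul, hV, Matrix.det_one]
      rw [Matrix.det_transpose] at h1
      rw [Matrix.det_transpose]
      rcases mul_self_eq_one_iff.mp h1 with h | h
      · rw [h]; norm_num
      · rw [h]; norm_num
    have himg : f '' (⋃ d ∈ T, cube d) ⊆
        Set.pi Set.univ fun i =>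
          Set.Icc (α i + ∑ j, min (V j i) 0) (β i + ∑ j, min (V j i) 0 + s) := by
      rintro y ⟨x, hx, rfl⟩
      rw [Set.mem_iUnion₂] at hx
      obtain ⟨d, hdT, hxd⟩ := hx
      have hdS : d ∈ S := (hmemT d).mp hdT
      intro i _
      have hfx : f x = Vᵀ *ᵥ x := Matrix.toLin'_apply _ _
      have hxi : ∀ j, d j ≤ x j ∧ x j < d j + 1 := by
        intro j
        have := hxd j (Set.mem_univ j)
        simpa [hcube] using this
      have hcoord : (Vᵀ *ᵥ x) i = (Vᵀ *ᵥ d) i + ∑ j, V j i * (x j - d j) := by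
        simp only [Matrix.mulVec, dotProduct, Matrix.transpose_apply]
        rw [← Finset.sum_add_distrib]
        exact Finset.sum_congr rfl fun j _ => by ring
      have hlow : ∀ j, min (V j i) 0 ≤ V j i * (x j - d j) := by
        intro j
        rcases le_or_gt 0 (V j i) with h | h
        · have h0 : 0 ≤ x j - d j := by linarith [(hxi j).1]
          calc min (V j i) 0 ≤ 0 := min_le_right _ _
            _ ≤ V j i * (x j - d j) := mul_nonneg h h0
        · have h0 : x j - d j ≤ 1 := by linarith [(hxi j).2]
          have h1 : 0 ≤ x j - d j := by linarith [(hxi j).1]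
          calc min (V j i) 0 ≤ V j i := min_le_left _ _
            _ ≤ V j i * (x j - d j) := by nlinarith
      have hhigh : ∀ j, V j i * (x j - d j) ≤ max (V j i) 0 := by
        intro j
        rcases le_or_gt 0 (V j i) with h | h
        · have h0 : x j - d j ≤ 1 := by linarith [(hxi j).2]
          have h1 : 0 ≤ x j - d j := by linarith [(hxi j).1]
          calc V j i * (x j - d j) ≤ V j i := by nlinarith
            _ ≤ max (V j i) 0 := le_max_left _ _
        · have h1 : 0 ≤ x j - d j := by linarith [(hxi j).1]
          calc V j i * (x j - d j) ≤ 0 := mul_nonpos_of_nonpos_of_nonneg h.le h1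
            _ ≤ max (V j i) 0 := le_max_right _ _
      have hcol : ∑ j, V j i ^ 2 = 1 := by
        have h0 := congrArg (fun M : Matrix (Fin n) (Fin n) ℝ => M i i) hV
        simpa [Matrix.mul_apply, Matrix.transpose_apply, Matrix.one_apply, pow_two] using h0
      have habs : ∑ j, |V j i| ≤ s := by
        have h1 : (∑ j, |V j i|) ^ 2 ≤ (n : ℝ) * ∑ j, |V j i| ^ 2 := by
          have h2 := sq_sum_le_card_mul_sum_sq (s := (Finset.univ : Finset (Fin n)))
            (f := fun j => |V j i|)
          simpa using h2
        have h2 : ∑ j, |V j i| ^ 2 = 1 := by simpa [sq_abs] using hcol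
        rw [h2, mul_one] at h1
        have h3 : 0 ≤ ∑ j, |V j i| := Finset.sum_nonneg fun j _ => abs_nonneg _
        rw [hs]
        exact (Real.le_sqrt h3 (Nat.cast_nonneg n)).mpr h1
      have hmaxmin : ∑ j, max (V j i) 0 ≤ ∑ j, min (V j i) 0 + s := by
        have h4 : ∑ j, max (V j i) 0 - ∑ j, min (V j i) 0 = ∑ j, |V j i| := by
          rw [← Finset.sum_sub_distrib]
          exact Finset.sum_congr rfl fun j _ => by
            rw [max_sub_min_eq_abs]
            simp
        linarith
      have hsumlow : ∑ j, min (V j i) 0 ≤ ∑ j, V j i * (x j - d j) :=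
        Finset.sum_le_sum fun j _ => hlow j
      have hsumhigh : ∑ j, V j i * (x j - d j) ≤ ∑ j, max (V j i) 0 :=
        Finset.sum_le_sum fun j _ => hhigh j
      have hwd := hw d hdS i
      have hfxi : f x i = (Vᵀ *ᵥ x) i := congrFun hfx i
      rw [hfxi, hcoord]
      constructor
      · linarith [hwd.1]
      · linarith [hwd.2]
    have hkey : volume (⋃ d ∈ T, cube d) ≤ ∏ i, ENNReal.ofReal (β i - α i + s) := by
      have himgvol : volume (f '' (⋃ d ∈ T, cube d))
          = ENNReal.ofReal |LinearMap.det f| * volume (⋃ d ∈ T, cube d) :=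
        MeasureTheory.Measure.addHaar_image_linearMap volume f _
      calc volume (⋃ d ∈ T, cube d) = volume (f '' (⋃ d ∈ T, cube d)) := by
            rw [himgvol, hdet, one_mul]
        _ ≤ volume (Set.pi Set.univ fun i =>
              Set.Icc (α i + ∑ j, min (V j i) 0) (β i + ∑ j, min (V j i) 0 + s)) :=
            measure_mono himg
        _ = ∏ i, ENNReal.ofReal (β i - α i + s) := by
            rw [volume_pi_pi]
            exact Finset.prod_congr rfl fun i _ => by
              rw [Real.volume_Icc]
              congr 1
              ring
    calc ((S.ncard : ℕ) : ℝ≥0∞) = (T.card : ℝ≥0∞) := by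
          rw [Set.ncard_eq_toFinset_card S hfin]
      _ = volume (⋃ d ∈ T, cube d) := hvolU.symm
      _ ≤ _ := hkey
  -- final conversion
  have h2 : ((S.ncard : ℕ) : ℝ≥0∞) ≤ ENNReal.ofReal (∏ i, (s + L i)) := by
    refine hcount.trans ?_
    rw [ENNReal.ofReal_prod_of_nonneg (fun i _ => by linarith [hL0 i])]
    exact Finset.prod_le_prod' fun i _ => ENNReal.ofReal_le_ofReal (by linarith [hβα i])
  have hprodnn : 0 ≤ ∏ i, (s + L i) :=
    Finset.prod_nonneg fun i _ => by linarith [hL0 i]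
  rw [← ENNReal.ofReal_natCast] at h2
  have hfinal := (ENNReal.ofReal_le_ofReal_iff hprodnn).mp h2
  calc ((S.ncard : ℕ) : ℝ) ≤ ∏ i, (s + L i) := hfinal
    _ = _ := Finset.prod_congr rfl fun i _ => by rw [hLdef]
end

section
/- Let E = {d ∈ ℝⁿ : ‖c - D d‖ ≤ ξ} be an ellipsoidal set with D ∈ ℝ^{n×n} invertible, c ∈ ℝⁿ, ξ > 0. Then the number of integer points in E is at least ∏_{i=1}^n max(2ξ/(√n σ_i(D)) - √n, 0), where σ_1(D) ≤ ... ≤ σ_n(D) are the singular values of D. -/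
/-!
Write `D = U Σ Vᵀ`. In the rotated coordinates `u = Vᵀ d` the ellipsoid is the axis-parallel
ellipsoid `∑ (mᵢ - σᵢ uᵢ)² ≤ ξ²` (`m = Uᵀ c`), which contains the box `|mᵢ - σᵢ uᵢ| ≤ ξ / √n`.
Shrink that box by `√n / 2` in every direction and rotate it back by `V`: rounding a point `x` of
the result to the nearest integer point moves `Vᵀ x` by at most `‖round x - x‖ ≤ √n / 2` in each
coordinate, so the rounded point still lies in the ellipsoid. The unit cubes around these integer
points cover the rotated box, whose volume is `∏ (2ξ / (√n σᵢ) - √n)`.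
-/

open Matrix MeasureTheory

section Orthogonal

variable {m ι : Type*} [Fintype m] [Fintype ι] [DecidableEq ι]

theorem sum_mulVec_sq_of_transpose_mul_self {M : Matrix m ι ℝ} (hM : Mᵀ * M = 1) (x : ι → ℝ) :
    ∑ i, (M *ᵥ x) i ^ 2 = ∑ i, x i ^ 2 := by
  have h : M *ᵥ x ⬝ᵥ M *ᵥ x = x ⬝ᵥ x := by
    rw [dotProduct_mulVec, ← mulVec_transpose, mulVec_mulVec, hM, one_mulVec]
  simpa [dotProduct, sq] using h

theorem abs_mulVec_apply_le_of_transpose_mul_self {M : Matrix m ι ℝ} (hM : Mᵀ * M = 1)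
    {w : ι → ℝ} {a : ℝ} (ha : 0 ≤ a) (hw : ∀ j, |w j| ≤ a) (i : m) :
    |(M *ᵥ w) i| ≤ √(Fintype.card ι) * a := by
  have hsq : (M *ᵥ w) i ^ 2 ≤ Fintype.card ι * a ^ 2 :=
    calc (M *ᵥ w) i ^ 2 ≤ ∑ k, (M *ᵥ w) k ^ 2 :=
          Finset.single_le_sum (fun k _ => sq_nonneg _) (Finset.mem_univ i)
      _ = ∑ j, w j ^ 2 := sum_mulVec_sq_of_transpose_mul_self hM w
      _ ≤ Finset.univ.card • a ^ 2 :=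
          Finset.sum_le_card_nsmul _ _ _ fun j _ => sq_le_sq.2 ((hw j).trans (le_abs_self a))
      _ = Fintype.card ι * a ^ 2 := by simp
  calc |(M *ᵥ w) i| ≤ √(Fintype.card ι * a ^ 2) := Real.abs_le_sqrt hsq
    _ = √(Fintype.card ι) * a := by rw [Real.sqrt_mul (Nat.cast_nonneg _), Real.sqrt_sq ha]

theorem abs_det_eq_one_of_transpose_mul_self {M : Matrix ι ι ℝ} (hM : Mᵀ * M = 1) :
    |M.det| = 1 := by
  have h := congrArg det hM
  rw [det_mul, det_transpose, det_one, ← sq] at h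
  exact (pow_eq_one_iff_of_nonneg (abs_nonneg _) two_ne_zero).1 (by rw [sq_abs, h])

theorem volume_image_toLin'_of_transpose_mul_self {M : Matrix ι ι ℝ} (hM : Mᵀ * M = 1)
    (s : Set (ι → ℝ)) : volume (toLin' M '' s) = volume s := by
  rw [Measure.addHaar_image_linearMap, LinearMap.det_toLin',
    abs_det_eq_one_of_transpose_mul_self hM, ENNReal.ofReal_one, one_mul]

end Orthogonal

section IntegerPoints

variable {ι : Type*} [Fintype ι]

def integerPoints (ι : Type*) : Set (ι → ℝ) := {x | ∀ i, ∃ z : ℤ, x i = z}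

theorem finite_integerPoints_inter {s : Set (ι → ℝ)} (hs : Bornology.IsBounded s) :
    (integerPoints ι ∩ s).Finite := by
  refine (ZSpan.setFinite_inter (Pi.basisFun ℝ ι) hs).subset fun x ⟨hx, hxs⟩ => ⟨hxs, ?_⟩
  rw [SetLike.mem_coe, Module.Basis.mem_span_iff_repr_mem]
  intro i
  obtain ⟨z, hz⟩ := hx i
  exact ⟨z, by simp [hz]⟩

theorem volume_le_ncard_of_round_mem {T S : Set (ι → ℝ)} (hS : S.Finite)
    (h : ∀ x ∈ T, (fun i => ((round (x i) : ℤ) : ℝ)) ∈ S) : volume T ≤ S.ncard := by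
  classical
  calc volume T ≤ volume (⋃ s ∈ hS.toFinset, Metric.closedBall s (1 / 2)) := by
        refine measure_mono fun x hx => Set.mem_biUnion (hS.mem_toFinset.2 (h x hx)) ?_
        rw [Metric.mem_closedBall, dist_pi_le_iff (by norm_num)]
        exact fun i => abs_sub_round (x i)
    _ ≤ ∑ s ∈ hS.toFinset, volume (Metric.closedBall s (1 / 2)) :=
        measure_biUnion_finset_le _ _
    _ = S.ncard := by simp [Real.volume_pi_closedBall, Set.ncard_eq_toFinset_card _ hS]

end IntegerPoints

def ellipsoid {ι : Type*} [Fintype ι] (D : Matrix ι ι ℝ) (c : ι → ℝ) (ξ : ℝ) : Set (ι → ℝ) :=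
  {d | √(∑ i, (c i - (D *ᵥ d) i) ^ 2) ≤ ξ}

section SVD

variable {ι : Type*} [Fintype ι] [DecidableEq ι] {D U V : Matrix ι ι ℝ} {σ : ι → ℝ}

theorem sum_sq_sub_mulVec_of_eq_svd (hU : Uᵀ * U = 1) (hsvd : D = U * diagonal σ * Vᵀ)
    (c d : ι → ℝ) :
    ∑ i, (c i - (D *ᵥ d) i) ^ 2 = ∑ i, ((Uᵀ *ᵥ c) i - σ i * (Vᵀ *ᵥ d) i) ^ 2 := by
  have hUt : Uᵀᵀ * Uᵀ = 1 := by rw [transpose_transpose]; exact mul_eq_one_comm.mp hU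
  have hD : Uᵀ *ᵥ (D *ᵥ d) = diagonal σ *ᵥ (Vᵀ *ᵥ d) := by
    rw [hsvd, mulVec_mulVec, mulVec_mulVec, ← Matrix.mul_assoc, ← Matrix.mul_assoc, hU,
      Matrix.one_mul]
  have h : Uᵀ *ᵥ (c - D *ᵥ d) = fun i => (Uᵀ *ᵥ c) i - σ i * (Vᵀ *ᵥ d) i := by
    ext i
    rw [mulVec_sub, hD, Pi.sub_apply, mulVec_diagonal]
  calc ∑ i, (c i - (D *ᵥ d) i) ^ 2 = ∑ i, (Uᵀ *ᵥ (c - D *ᵥ d)) i ^ 2 :=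
        (sum_mulVec_sq_of_transpose_mul_self hUt _).symm
    _ = _ := by rw [h]

theorem mem_ellipsoid_of_eq_svd (hU : Uᵀ * U = 1) (hsvd : D = U * diagonal σ * Vᵀ)
    {c d : ι → ℝ} {ξ : ℝ} (hξ : 0 ≤ ξ)
    (h : ∀ i, |(Uᵀ *ᵥ c) i - σ i * (Vᵀ *ᵥ d) i| ≤ ξ / √(Fintype.card ι)) :
    d ∈ ellipsoid D c ξ := by
  rw [ellipsoid, Set.mem_ofPred_eq, sum_sq_sub_mulVec_of_eq_svd hU hsvd, Real.sqrt_le_iff]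
  refine ⟨hξ, ?_⟩
  calc ∑ i, ((Uᵀ *ᵥ c) i - σ i * (Vᵀ *ᵥ d) i) ^ 2
      ≤ Finset.univ.card • (ξ / √(Fintype.card ι)) ^ 2 :=
        Finset.sum_le_card_nsmul _ _ _ fun i _ => sq_le_sq.2 ((h i).trans (le_abs_self _))
    _ ≤ ξ ^ 2 := by
        rcases Nat.eq_zero_or_pos (Fintype.card ι) with h0 | h0
        · simp [h0]
          positivity
        · rw [Finset.card_univ, nsmul_eq_mul, div_pow, Real.sq_sqrt (Nat.cast_nonneg _),
            mul_div_cancel₀ _ (by positivity)]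

theorem isBounded_ellipsoid_of_eq_svd (hU : Uᵀ * U = 1) (hV : Vᵀ * V = 1)
    (hsvd : D = U * diagonal σ * Vᵀ) (hσ : ∀ i, 0 < σ i) (c : ι → ℝ) (ξ : ℝ) :
    Bornology.IsBounded (ellipsoid D c ξ) := by
  have hK : IsCompact ((V *ᵥ ·) '' Set.Icc (fun i => ((Uᵀ *ᵥ c) i - ξ) / σ i)
      (fun i => ((Uᵀ *ᵥ c) i + ξ) / σ i)) :=
    isCompact_Icc.image (Continuous.matrix_mulVec continuous_const continuous_id)
  refine hK.isBounded.subset fun d hd => ?_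
  have hcoord : ∀ i, |(Uᵀ *ᵥ c) i - σ i * (Vᵀ *ᵥ d) i| ≤ ξ := by
    rw [ellipsoid, Set.mem_ofPred_eq, sum_sq_sub_mulVec_of_eq_svd hU hsvd, Real.sqrt_le_iff] at hd
    exact fun i => abs_le_of_sq_le_sq ((Finset.single_le_sum
      (f := fun k => ((Uᵀ *ᵥ c) k - σ k * (Vᵀ *ᵥ d) k) ^ 2) (fun k _ => sq_nonneg _)
      (Finset.mem_univ i)).trans hd.2) hd.1
  refine ⟨Vᵀ *ᵥ d, ⟨fun i => ?_, fun i => ?_⟩, ?_⟩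
  · rw [div_le_iff₀ (hσ i)]
    linarith [(abs_le.1 (hcoord i)).2]
  · rw [le_div_iff₀ (hσ i)]
    linarith [(abs_le.1 (hcoord i)).1]
  · change V *ᵥ (Vᵀ *ᵥ d) = d
    rw [mulVec_mulVec, mul_eq_one_comm.mp hV, one_mulVec]

theorem round_mulVec_mem_ellipsoid (hU : Uᵀ * U = 1) (hV : Vᵀ * V = 1)
    (hsvd : D = U * diagonal σ * Vᵀ) (hσ : ∀ i, 0 ≤ σ i) {c y₀ t y : ι → ℝ} {ξ : ℝ}
    (hξ : 0 ≤ ξ) (hy₀ : ∀ i, σ i * y₀ i = (Uᵀ *ᵥ c) i)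
    (ht : ∀ i, σ i * (t i + √(Fintype.card ι) / 2) ≤ ξ / √(Fintype.card ι))
    (hy : ∀ i, |y i - y₀ i| ≤ t i) :
    (fun j => ((round ((V *ᵥ y) j) : ℤ) : ℝ)) ∈ ellipsoid D c ξ := by
  set z : ι → ℝ := fun j => ((round ((V *ᵥ y) j) : ℤ) : ℝ)
  have hVt : Vᵀᵀ * Vᵀ = 1 := by rw [transpose_transpose]; exact mul_eq_one_comm.mp hV
  have hround : ∀ i, |y i - (Vᵀ *ᵥ z) i| ≤ √(Fintype.card ι) / 2 := by
    intro i
    have h := abs_mulVec_apply_le_of_transpose_mul_self hVt (w := V *ᵥ y - z) (a := 1 / 2)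
      (by norm_num) (fun j => abs_sub_round _) i
    rwa [mulVec_sub, mulVec_mulVec, hV, one_mulVec, mul_one_div] at h
  refine mem_ellipsoid_of_eq_svd hU hsvd hξ fun i => ?_
  calc |(Uᵀ *ᵥ c) i - σ i * (Vᵀ *ᵥ z) i| = σ i * |y₀ i - (Vᵀ *ᵥ z) i| := by
        rw [← hy₀, ← mul_sub, abs_mul, abs_of_nonneg (hσ i)]
    _ ≤ σ i * (t i + √(Fintype.card ι) / 2) := by
        gcongr
        · exact hσ i
        calc |y₀ i - (Vᵀ *ᵥ z) i| ≤ |y₀ i - y i| + |y i - (Vᵀ *ᵥ z) i| := abs_sub_le _ _ _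
          _ ≤ t i + √(Fintype.card ι) / 2 := by
            rw [abs_sub_comm]
            exact add_le_add (hy i) (hround i)
    _ ≤ ξ / √(Fintype.card ι) := ht i

theorem prod_two_mul_le_ncard_integerPoints_inter_ellipsoid (hU : Uᵀ * U = 1)
    (hV : Vᵀ * V = 1) (hsvd : D = U * diagonal σ * Vᵀ) (hσ : ∀ i, 0 < σ i) {c t : ι → ℝ}
    {ξ : ℝ} (hξ : 0 ≤ ξ) (ht₀ : ∀ i, 0 ≤ t i)
    (ht : ∀ i, σ i * (t i + √(Fintype.card ι) / 2) ≤ ξ / √(Fintype.card ι)) :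
    ∏ i, 2 * t i ≤ (integerPoints ι ∩ ellipsoid D c ξ).ncard := by
  set y₀ : ι → ℝ := fun i => (Uᵀ *ᵥ c) i / σ i
  have hround : ∀ x ∈ toLin' V '' Set.Icc (y₀ - t) (y₀ + t),
      (fun i => ((round (x i) : ℤ) : ℝ)) ∈ integerPoints ι ∩ ellipsoid D c ξ := by
    rintro _ ⟨y, hy, rfl⟩
    exact ⟨fun i => ⟨_, rfl⟩, round_mulVec_mem_ellipsoid hU hV hsvd (fun i => (hσ i).le) hξ
      (fun i => mul_div_cancel₀ _ (hσ i).ne') ht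
      (fun i => abs_sub_le_iff.2 ⟨sub_le_iff_le_add'.2 (hy.2 i), sub_le_comm.1 (hy.1 i)⟩)⟩
  have h := volume_le_ncard_of_round_mem
    (finite_integerPoints_inter (isBounded_ellipsoid_of_eq_svd hU hV hsvd hσ c ξ)) hround
  rw [volume_image_toLin'_of_transpose_mul_self hV, Real.volume_Icc_pi,
    ← ENNReal.ofReal_prod_of_nonneg (fun i _ => by simp [ht₀ i]), ← ENNReal.ofReal_natCast,
    ENNReal.ofReal_le_ofReal_iff (Nat.cast_nonneg _)] at h
  simpa [two_mul] using h

end SVD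

theorem stmt1_general (n : ℕ) (D : Matrix (Fin n) (Fin n) ℝ)
    (c : Fin n → ℝ) (ξ : ℝ) (hξ : 0 < ξ)
    (σ : Fin n → ℝ)
    (U V : Matrix (Fin n) (Fin n) ℝ) (hU : Uᵀ * U = 1) (hV : Vᵀ * V = 1)
    (hsvd : D = U * Matrix.diagonal σ * Vᵀ) :
    (∏ i, max (2 * ξ / (Real.sqrt n * σ i) - Real.sqrt n) 0)
      ≤ ((Set.ncard {d : Fin n → ℝ | (∀ i, ∃ z : ℤ, d i = (z : ℝ)) ∧
          Real.sqrt (∑ i, (c i - D.mulVec d i) ^ 2) ≤ ξ} : ℕ) : ℝ) := by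
  by_cases hpos : ∀ i, 0 < 2 * ξ / (√n * σ i) - √n
  swap
  · obtain ⟨i, hi⟩ := not_forall.1 hpos
    rw [Finset.prod_eq_zero (Finset.mem_univ i) (max_eq_right (not_lt.1 hi))]
    positivity
  have hσ : ∀ i, 0 < σ i := fun i => by
    by_contra! h
    have : 2 * ξ / (√n * σ i) ≤ 0 := div_nonpos_of_nonneg_of_nonpos (by positivity)
      (mul_nonpos_of_nonneg_of_nonpos (Real.sqrt_nonneg _) h)
    linarith [hpos i, Real.sqrt_nonneg n]
  have hcount := prod_two_mul_le_ncard_integerPoints_inter_ellipsoid hU hV hsvd hσ (c := c)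
    (t := fun i => ξ / √n / σ i - √n / 2) hξ.le
    (fun i => by linarith [hpos i, show 2 * ξ / (√n * σ i) = 2 * (ξ / √n / σ i) by ring])
    (fun i => by rw [Fintype.card_fin, sub_add_cancel, mul_div_cancel₀ _ (hσ i).ne'])
  calc ∏ i, max (2 * ξ / (√n * σ i) - √n) 0 = ∏ i, 2 * (ξ / √n / σ i - √n / 2) :=
        Finset.prod_congr rfl fun i _ => by rw [max_eq_left (hpos i).le]; ring
    _ ≤ _ := hcount

/-- Lemma 1 (lower bound): the number of integer points in the ellipsoid
`{d | ‖c - D d‖ ≤ ξ}` (with `D` invertible) is at least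
`∏ i, max (2ξ/(√n σ_i(D)) - √n) 0`, where `σ_1(D) ≤ ... ≤ σ_n(D)` are the
singular values of `D`. -/
theorem stmt1 (n : ℕ) (hn : 1 ≤ n) (D : Matrix (Fin n) (Fin n) ℝ) (hD : IsUnit D.det)
    (c : Fin n → ℝ) (ξ : ℝ) (hξ : 0 < ξ)
    (σ : Fin n → ℝ) (hmono : Monotone σ) (hnn : ∀ i, 0 ≤ σ i)
    (U V : Matrix (Fin n) (Fin n) ℝ) (hU : Uᵀ * U = 1) (hV : Vᵀ * V = 1)
    (hsvd : D = U * Matrix.diagonal σ * Vᵀ) :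
    (∏ i, max (2 * ξ / (Real.sqrt n * σ i) - Real.sqrt n) 0)
      ≤ ((Set.ncard {d : Fin n → ℝ | (∀ i, ∃ z : ℤ, d i = (z : ℝ)) ∧
          Real.sqrt (∑ i, (c i - D.mulVec d i) ^ 2) ≤ ξ} : ℕ) : ℝ) :=
  stmt1_general n D c ξ hξ σ U V hU hV hsvd
end

section
/- If C₃ ⊆ ℝⁿ is an orthotope (box, possibly rotated) with side lengths l₁,...,l_n, then the number of integer points in C₃ is at most ∏_{i=1}^n (√n + l_i). -/
open MeasureTheory Set Finset
open scoped ENNReal NNReal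

/-- Key counting lemma: any finite set of integer points in the orthotope has
cardinality at most `∏ i, (√n + l i)`. -/
lemma key_count (n : ℕ) (x0 : Fin n → ℝ) (v : Fin n → Fin n → ℝ)
    (hv : ∀ i j, (∑ k, v i k * v j k) = if i = j then (1 : ℝ) else 0)
    (l : Fin n → ℝ) (hl : ∀ i, 0 ≤ l i) (T : Finset (Fin n → ℝ))
    (hT : ∀ x ∈ T, (∀ i, ∃ z : ℤ, x i = (z : ℝ)) ∧
        ∃ t : Fin n → ℝ, (∀ i, 0 ≤ t i ∧ t i ≤ l i) ∧
          x = x0 + ∑ i, t i • v i) :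
    (T.card : ℝ) ≤ ∏ i, (Real.sqrt n + l i) := by
  set s : ℝ := Real.sqrt n with hs
  have hs0 : 0 ≤ s := Real.sqrt_nonneg _
  -- the matrix with rows v i
  set M : Matrix (Fin n) (Fin n) ℝ := Matrix.of v with hM
  have hMMT : M * M.transpose = 1 := by
    ext i j
    simp [Matrix.mul_apply, Matrix.transpose_apply, hM, hv i j, Matrix.one_apply]
  have hdet : M.det * M.det = 1 := by
    have := congrArg Matrix.det hMMT
    rwa [Matrix.det_mul, Matrix.det_transpose, Matrix.det_one] at this
  have hdetne : M.det ≠ 0 := by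
    intro h; rw [h, zero_mul] at hdet; exact zero_ne_one hdet
  have habs : |M.det| = 1 := by
    rcases mul_self_eq_one_iff.1 hdet with h | h <;> rw [h] <;> norm_num
  -- the linear map
  set A := Matrix.toLin' M with hA
  have hdetA : LinearMap.det A = M.det := LinearMap.det_toLin' M
  -- the enlarged aligned box in coordinates
  set B : Set (Fin n → ℝ) := Set.univ.pi (fun i => Icc (-(s/2)) (l i + s/2)) with hB
  set c : Fin n → ℝ := fun k => x0 k + 1/2 with hc
  set C4 : Set (Fin n → ℝ) := (fun y => y + (-c)) ⁻¹' (A ⁻¹' B) with hC4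
  -- volume of C4
  have hvolB : volume B = ∏ i, ENNReal.ofReal (s + l i) := by
    rw [hB, volume_pi_pi]
    congr 1; ext i; rw [Real.volume_Icc]; congr 1; ring
  have hvolC4 : volume C4 = ∏ i, ENNReal.ofReal (s + l i) := by
    rw [hC4, measure_preimage_add_right volume (-c) (A ⁻¹' B)]
    rw [Measure.addHaar_preimage_linearMap volume (by rw [hdetA]; exact hdetne) B]
    rw [hdetA, abs_inv, habs]
    simp [hvolB]
  -- the unit half-open cubes
  set Q : (Fin n → ℝ) → Set (Fin n → ℝ) :=
    fun x => Set.univ.pi (fun i => Ico (x i) (x i + 1)) with hQ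
  have hQmeas : ∀ x, MeasurableSet (Q x) := fun x =>
    MeasurableSet.univ_pi fun i => measurableSet_Ico
  have hQvol : ∀ x, volume (Q x) = 1 := by
    intro x
    rw [hQ, volume_pi_pi]
    simp [Real.volume_Ico]
  -- each cube based at a point of T is contained in C4
  have hsub : ∀ x ∈ T, Q x ⊆ C4 := by
    intro x hx y hy
    obtain ⟨-, t, ht, hxt⟩ := hT x hx
    simp only [hQ, Set.mem_univ_pi, Set.mem_Ico] at hy
    simp only [hC4, Set.mem_preimage, hA, Matrix.toLin'_apply, hB, Set.mem_univ_pi]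
    intro i
    have hxk : ∀ k, x k = x0 k + ∑ j, t j * v j k := by
      intro k
      rw [hxt]
      simp [Finset.sum_apply]
    -- decompose entry i of M.mulVec (y - c)
    have horth : (∑ k, v i k * ∑ j, t j * v j k) = t i := by
      simp_rw [Finset.mul_sum]
      rw [Finset.sum_comm]
      have heach : ∀ j, (∑ k, v i k * (t j * v j k)) = t j * ∑ k, v i k * v j k :=
        fun j => by rw [Finset.mul_sum]; exact Finset.sum_congr rfl fun k _ => by ring
      simp_rw [heach, hv]
      simp
    have hentry : M.mulVec (y + (-c)) i
        = t i + ∑ k, v i k * (y k - x k - 1/2) := by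
      have h1 : M.mulVec (y + (-c)) i = ∑ k, v i k * (y k - x0 k - 1/2) := by
        simp only [Matrix.mulVec, dotProduct, hM, Matrix.of_apply,
          Pi.add_apply, Pi.neg_apply]
        exact Finset.sum_congr rfl fun k _ => by simp only [hc]; ring
      rw [h1]
      have h2 : ∀ k, y k - x0 k - 1/2 = (∑ j, t j * v j k) + (y k - x k - 1/2) := by
        intro k; rw [hxk k]; ring
      simp_rw [h2, mul_add, Finset.sum_add_distrib, horth]
    -- bound the error term by Cauchy–Schwarz
    set E : ℝ := ∑ k, v i k * (y k - x k - 1/2) with hE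
    have hE2 : E ^ 2 ≤ (n : ℝ) / 4 := by
      have hcs := Finset.sum_mul_sq_le_sq_mul_sq Finset.univ
        (fun k => v i k) (fun k => y k - x k - 1/2)
      have h1 : (∑ k, v i k ^ 2) = 1 := by
        simp_rw [pow_two]
        simpa using hv i i
      have h2 : (∑ k, (y k - x k - 1/2) ^ 2) ≤ (n : ℝ) / 4 := by
        have hterm : ∀ k ∈ Finset.univ, (y k - x k - 1/2 : ℝ) ^ 2 ≤ 1/4 := by
          intro k _
          have h := hy k
          nlinarith [h.1, h.2]
        calc (∑ k, (y k - x k - 1/2) ^ 2) ≤ ∑ _k : Fin n, (1/4 : ℝ) :=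
              Finset.sum_le_sum hterm
          _ = (n : ℝ) / 4 := by
              rw [Finset.sum_const, Finset.card_univ, Fintype.card_fin,
                nsmul_eq_mul]; ring
      calc E ^ 2 ≤ (∑ k, v i k ^ 2) * (∑ k, (y k - x k - 1/2) ^ 2) := hcs
        _ ≤ (n : ℝ) / 4 := by rw [h1, one_mul]; exact h2
    have hEabs : |E| ≤ s / 2 := by
      have h4 : ((n : ℝ) / 4) = (s / 2) ^ 2 := by
        rw [hs, div_pow, Real.sq_sqrt (Nat.cast_nonneg n)]; norm_num
      rw [h4] at hE2
      have := Real.sqrt_le_sqrt hE2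
      rwa [Real.sqrt_sq_eq_abs, Real.sqrt_sq (by positivity)] at this
    have hti := ht i
    rw [hentry]
    have habsE := abs_le.1 hEabs
    refine Set.mem_Icc.2 ⟨?_, ?_⟩
    · linarith [hti.1, habsE.1]
    · linarith [hti.2, habsE.2]
  -- cubes are pairwise disjoint
  have hdisj : (↑T : Set (Fin n → ℝ)).PairwiseDisjoint Q := by
    intro x hx y hy hxy
    refine Set.disjoint_left.mpr ?_
    intro a hax hay
    have hxi := (hT x hx).1
    have hyi := (hT y hy).1
    obtain ⟨k, hk⟩ := Function.ne_iff.1 hxy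
    obtain ⟨z, hz⟩ := hxi k
    obtain ⟨w, hw⟩ := hyi k
    simp only [hQ, Set.mem_univ_pi, Set.mem_Ico] at hax hay
    have hax' := hax k
    have hay' := hay k
    have hzw : z ≠ w := by
      intro h; apply hk; rw [hz, hw, h]
    rcases lt_or_gt_of_ne hzw with h | h
    · have : (z : ℝ) + 1 ≤ w := by exact_mod_cast Int.add_one_le_of_lt h
      rw [hz] at hax'; rw [hw] at hay'
      linarith [hax'.2, hay'.1]
    · have : (w : ℝ) + 1 ≤ z := by exact_mod_cast Int.add_one_le_of_lt h
      rw [hz] at hax'; rw [hw] at hay'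
      linarith [hay'.2, hax'.1]
  -- count via measure
  have hcount : (T.card : ℝ≥0∞) ≤ volume C4 := by
    have h1 : volume (⋃ x ∈ T, Q x) = ∑ x ∈ T, volume (Q x) :=
      measure_biUnion_finset hdisj (fun x _ => hQmeas x)
    have h2 : (⋃ x ∈ T, Q x) ⊆ C4 := by
      intro a ha
      simp only [Set.mem_iUnion] at ha
      obtain ⟨x, hx, hax⟩ := ha
      exact hsub x hx hax
    calc (T.card : ℝ≥0∞) = ∑ x ∈ T, volume (Q x) := by simp [hQvol]
      _ = volume (⋃ x ∈ T, Q x) := h1.symm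
      _ ≤ volume C4 := measure_mono h2
  -- transfer to ℝ
  rw [hvolC4] at hcount
  have hprodnn : ∀ i ∈ Finset.univ, (0 : ℝ) ≤ s + l i := fun i _ => by
    linarith [hl i, hs0]
  rw [← ENNReal.ofReal_prod_of_nonneg hprodnn] at hcount
  have hne : ENNReal.ofReal (∏ i, (s + l i)) ≠ ⊤ := ENNReal.ofReal_ne_top
  have h3 := ENNReal.toReal_mono hne hcount
  rw [ENNReal.toReal_ofReal (Finset.prod_nonneg hprodnn)] at h3
  simpa using h3

/-- The number of integer points in an orthotope (possibly rotated box) with side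
lengths `l₁,...,l_n` is at most `∏ i, (√n + l_i)`. -/
theorem stmt3 (n : ℕ) (hn : 1 ≤ n) (x0 : Fin n → ℝ) (v : Fin n → Fin n → ℝ)
    (hv : ∀ i j, (∑ k, v i k * v j k) = if i = j then (1 : ℝ) else 0)
    (l : Fin n → ℝ) (hl : ∀ i, 0 ≤ l i) :
    ((Set.ncard {x : Fin n → ℝ | (∀ i, ∃ z : ℤ, x i = (z : ℝ)) ∧
        ∃ t : Fin n → ℝ, (∀ i, 0 ≤ t i ∧ t i ≤ l i) ∧
          x = x0 + ∑ i, t i • v i} : ℕ) : ℝ)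
      ≤ ∏ i, (Real.sqrt n + l i) := by
  set S := {x : Fin n → ℝ | (∀ i, ∃ z : ℤ, x i = (z : ℝ)) ∧
        ∃ t : Fin n → ℝ, (∀ i, 0 ≤ t i ∧ t i ≤ l i) ∧
          x = x0 + ∑ i, t i • v i} with hS
  by_cases hfin : S.Finite
  · have h := key_count n x0 v hv l hl hfin.toFinset
      (fun x hx => (Set.Finite.mem_toFinset hfin).1 hx)
    rwa [Set.ncard_eq_toFinset_card S hfin]
  · rw [Set.Infinite.ncard hfin]
    simp only [Nat.cast_zero]
    exact Finset.prod_nonneg fun i _ => by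
      linarith [hl i, Real.sqrt_nonneg (n : ℝ)]
end

section
/- If C₁ ⊆ ℝⁿ is an orthotope with side lengths b₁,...,b_n, then the number of integer points in C₁ is at least ∏_{i=1}^n max(b_i - √n, 0). -/
/-!
Write the orthotope as `x₀ + Mᵀ [0, b]` with `M` orthogonal (its rows are the edge directions)
and shrink it by `√n / 2` on every side. Rounding a point of the shrunk orthotope to the nearest
integer point moves it by a vector `u` with `‖u‖∞ ≤ 1/2`, so `‖u‖₂ ≤ √n / 2`, and `u` has edge
coordinates of size at most `√n / 2`: the integer point still lies in the orthotope. Hence the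
unit cubes around its integer points cover the shrunk orthotope, whose volume is
`∏ (bᵢ - √n)` because `M` preserves volume.
-/

open MeasureTheory Matrix Metric

variable {ι : Type*} [Fintype ι]

def latticePoints (s : Set (ι → ℝ)) : Set (ι → ℝ) :=
  {x | (∀ i, ∃ z : ℤ, x i = z) ∧ x ∈ s}

theorem latticePoints_eq_inter_span (s : Set (ι → ℝ)) :
    latticePoints s = s ∩ Submodule.span ℤ (Set.range (Pi.basisFun ℝ ι)) := by
  ext x
  simp [latticePoints, Module.Basis.mem_span_iff_repr_mem, eq_comm, and_comm]

theorem finite_latticePoints {s : Set (ι → ℝ)} (hs : Bornology.IsBounded s) :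
    (latticePoints s).Finite := by
  rw [latticePoints_eq_inter_span]
  exact ZSpan.setFinite_inter _ hs

theorem exists_intVector_dist_le_half (x : ι → ℝ) :
    ∃ z : ι → ℝ, (∀ i, ∃ m : ℤ, z i = m) ∧ dist x z ≤ 1 / 2 :=
  ⟨fun i => round (x i), fun i => ⟨_, rfl⟩,
    (dist_pi_le_iff (by norm_num)).2 fun i => by simpa [Real.dist_eq] using abs_sub_round (x i)⟩

theorem volume_biUnion_closedBall_half_le_ncard {T : Set (ι → ℝ)} (hT : T.Finite) :
    volume (⋃ z ∈ T, closedBall z (1 / 2)) ≤ T.ncard := by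
  calc volume (⋃ z ∈ T, closedBall z (1 / 2))
        = volume (⋃ z ∈ hT.toFinset, closedBall z (1 / 2)) := by
        simp only [Set.Finite.mem_toFinset]
    _ ≤ ∑ z ∈ hT.toFinset, volume (closedBall z (1 / 2)) := measure_biUnion_finset_le _ _
    _ = T.ncard := by simp [Set.ncard_eq_toFinset_card T hT]

theorem abs_sum_mul_le_sqrt_card_mul_norm (u w : ι → ℝ) (hw : ∑ k, w k ^ 2 = 1) :
    |∑ k, u k * w k| ≤ √(Fintype.card ι) * ‖u‖ := by
  have hu : ∑ k, u k ^ 2 ≤ Fintype.card ι * ‖u‖ ^ 2 := by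
    calc ∑ k, u k ^ 2 ≤ ∑ _k : ι, ‖u‖ ^ 2 := Finset.sum_le_sum fun k _ => by
          simpa [sq_abs] using pow_le_pow_left₀ (abs_nonneg _) (norm_le_pi_norm u k) 2
      _ = Fintype.card ι * ‖u‖ ^ 2 := by simp
  calc |∑ k, u k * w k| ≤ √(Fintype.card ι * ‖u‖ ^ 2) := Real.abs_le_sqrt <| by
        simpa [hw] using (Finset.sum_mul_sq_le_sq_mul_sq Finset.univ u w).trans
          (mul_le_mul_of_nonneg_right hu (by positivity))
    _ = √(Fintype.card ι) * ‖u‖ := by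
        rw [Real.sqrt_mul (by positivity), Real.sqrt_sq (norm_nonneg u)]

def orthotope (x₀ : ι → ℝ) (M : Matrix ι ι ℝ) (a b : ι → ℝ) : Set (ι → ℝ) :=
  (fun t => x₀ + t ᵥ* M) '' Set.Icc a b

theorem isBounded_orthotope (x₀ : ι → ℝ) (M : Matrix ι ι ℝ) (a b : ι → ℝ) :
    Bornology.IsBounded (orthotope x₀ M a b) :=
  (isCompact_Icc.image (by fun_prop)).isBounded

section Orthogonal

variable [DecidableEq ι] {M : Matrix ι ι ℝ}

theorem sum_sq_row_eq_one (hM : M * Mᵀ = 1) (i : ι) : ∑ k, M i k ^ 2 = 1 := by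
  simpa [Matrix.mul_apply, sq] using congrFun (congrFun hM i) i

theorem vecMul_transpose_vecMul (hM : M * Mᵀ = 1) (u : ι → ℝ) : u ᵥ* Mᵀ ᵥ* M = u := by
  rw [vecMul_vecMul, mul_eq_one_comm.mp hM, vecMul_one]

theorem abs_vecMul_transpose_le (hM : M * Mᵀ = 1) (u : ι → ℝ) (i : ι) :
    |(u ᵥ* Mᵀ) i| ≤ √(Fintype.card ι) * ‖u‖ :=
  abs_sum_mul_le_sqrt_card_mul_norm u (M i) (sum_sq_row_eq_one hM i)

theorem volume_image_vecMul (hM : M * Mᵀ = 1) (s : Set (ι → ℝ)) :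
    volume ((· ᵥ* M) '' s) = volume s := by
  have hdet : |M.det| = 1 := by
    have h := congrArg det hM
    rw [det_mul, det_transpose, det_one] at h
    rcases mul_self_eq_one_iff.mp h with h | h <;> simp [h]
  have himage : (· ᵥ* M) '' s = toLin' Mᵀ '' s := by
    ext; simp [mulVec_transpose]
  rw [himage, Measure.addHaar_image_linearMap, LinearMap.det_toLin', det_transpose, hdet,
    ENNReal.ofReal_one, one_mul]

theorem volume_orthotope (hM : M * Mᵀ = 1) (x₀ a b : ι → ℝ) :
    volume (orthotope x₀ M a b) = ∏ i, ENNReal.ofReal (b i - a i) := by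
  rw [orthotope, ← Set.image_image (x₀ + ·) (· ᵥ* M), Set.image_add_left, measure_preimage_add,
    volume_image_vecMul hM, Real.volume_Icc_pi]

theorem orthotope_subset_biUnion_closedBall_latticePoints (hM : M * Mᵀ = 1) (x₀ b : ι → ℝ)
    {r : ℝ} (hr : √(Fintype.card ι) / 2 ≤ r) :
    orthotope x₀ M (fun _ => r) (fun i => b i - r) ⊆
      ⋃ z ∈ latticePoints (orthotope x₀ M 0 b), closedBall z (1 / 2) := by
  rintro _ ⟨t, ⟨htr, htb⟩, rfl⟩
  obtain ⟨z, hz, hdist⟩ := exists_intVector_dist_le_half (x₀ + t ᵥ* M)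
  set u := z - (x₀ + t ᵥ* M)
  have hu : ‖u‖ ≤ 1 / 2 := by rwa [dist_comm, dist_eq_norm] at hdist
  have hs (i : ι) : |(u ᵥ* Mᵀ) i| ≤ r := calc
    _ ≤ √(Fintype.card ι) * ‖u‖ := abs_vecMul_transpose_le hM u i
    _ ≤ √(Fintype.card ι) * (1 / 2) := by gcongr
    _ ≤ r := by linarith
  refine Set.mem_iUnion₂.2 ⟨z, ⟨hz, t + u ᵥ* Mᵀ, ⟨fun i => ?_, fun i => ?_⟩, ?_⟩, hdist⟩
  · simp only [Pi.zero_apply, Pi.add_apply]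
    linarith [htr i, (abs_le.1 (hs i)).1]
  · simp only [Pi.add_apply]
    linarith [htb i, (abs_le.1 (hs i)).2]
  · dsimp only
    rw [add_vecMul, vecMul_transpose_vecMul hM]
    simp only [u]
    abel

end Orthogonal

theorem stmt4_general (n : ℕ) (x0 : Fin n → ℝ) (v : Fin n → Fin n → ℝ)
    (hv : ∀ i j, (∑ k, v i k * v j k) = if i = j then (1 : ℝ) else 0)
    (b : Fin n → ℝ) :
    (∏ i, max (b i - Real.sqrt n) 0)
      ≤ ((Set.ncard {x : Fin n → ℝ | (∀ i, ∃ z : ℤ, x i = (z : ℝ)) ∧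
          ∃ t : Fin n → ℝ, (∀ i, 0 ≤ t i ∧ t i ≤ b i) ∧
            x = x0 + ∑ i, t i • v i} : ℕ) : ℝ) := by
  set M : Matrix (Fin n) (Fin n) ℝ := Matrix.of v
  have hM : M * Mᵀ = 1 := by
    ext i j
    simpa [M, Matrix.mul_apply, one_apply] using hv i j
  have hset : {x : Fin n → ℝ | (∀ i, ∃ z : ℤ, x i = (z : ℝ)) ∧
      ∃ t : Fin n → ℝ, (∀ i, 0 ≤ t i ∧ t i ≤ b i) ∧ x = x0 + ∑ i, t i • v i} =
      latticePoints (orthotope x0 M 0 b) := by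
    ext x
    simp only [latticePoints, orthotope, M, Set.mem_ofPred_eq, Set.mem_image, Set.mem_Icc,
      Pi.le_def, Pi.zero_apply, vecMul_eq_sum, eq_comm, forall_and, and_congr_right_iff]
    exact fun _ => Iff.rfl
  have hcount := (measure_mono (orthotope_subset_biUnion_closedBall_latticePoints hM x0 b
    le_rfl)).trans (volume_biUnion_closedBall_half_le_ncard
      (finite_latticePoints (isBounded_orthotope x0 M 0 b)))
  rw [volume_orthotope hM] at hcount
  simp only [Fintype.card_fin, sub_sub, add_halves] at hcount
  rw [hset, ← ENNReal.ofReal_le_natCast,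
    ENNReal.ofReal_prod_of_nonneg fun _ _ => le_max_right _ _]
  simpa using hcount

/-- The number of integer points in an orthotope (possibly rotated box) with side
lengths `b₁,...,b_n` is at least `∏ i, max (b_i - √n) 0`. -/
theorem stmt4 (n : ℕ) (hn : 1 ≤ n) (x0 : Fin n → ℝ) (v : Fin n → Fin n → ℝ)
    (hv : ∀ i j, (∑ k, v i k * v j k) = if i = j then (1 : ℝ) else 0)
    (b : Fin n → ℝ) (hb : ∀ i, 0 ≤ b i) :
    (∏ i, max (b i - Real.sqrt n) 0)
      ≤ ((Set.ncard {x : Fin n → ℝ | (∀ i, ∃ z : ℤ, x i = (z : ℝ)) ∧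
          ∃ t : Fin n → ℝ, (∀ i, 0 ≤ t i ∧ t i ≤ b i) ∧
            x = x0 + ∑ i, t i • v i} : ℕ) : ℝ) :=
  stmt4_general n x0 v hv b
end

section
/- (Stewart's perturbation bound for projections) Let B, C ∈ ℂ^{p×q} with rank(B) = rank(C). Then ‖Π⊥_B − Π⊥_C‖ ≤ min(‖B⁺‖, ‖C⁺‖) · ‖B − C‖, where Π⊥_B denotes the orthogonal projection onto the orthogonal complement of the range of B, B⁺ is the Moore–Penrose pseudoinverse, and ‖·‖ is the spectral norm. -/
open Matrix

/-- The spectral norm (largest singular value) of a complex matrix, as the operator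
norm of the induced map between Euclidean spaces. -/
noncomputable def specNorm {p q : ℕ} (M : Matrix (Fin p) (Fin q) ℂ) : ℝ :=
  ‖LinearMap.toContinuousLinearMap (Matrix.toEuclideanLin M)‖

/-!
`P = BB⁺` and `Q = CC⁺` are orthogonal projections with `rank P = rank B`, `rank Q = rank C`, and
`Π⊥_B − Π⊥_C = Q − P`. Splitting `(P − Q)x` into the orthogonal pieces `(1 − Q)Px` and `Q(1 − P)x`
gives `‖P − Q‖ ≤ max ‖(1 − Q)P‖ ‖(1 − P)Q‖`. When the ranks agree the two terms coincide: with
`b = ‖(1 − P)Q‖`, `P` maps `range Q` to `range P` with `‖Pv‖² ≥ (1 − b²)‖v‖²`, and between spaces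
of equal dimension such a lower bound passes to the adjoint `Q : range P → range Q`, which gives
`‖(1 − Q)P‖ ≤ b`. Finally `(1 − Q)C = 0`, so `(1 − Q)P = (1 − Q)(B − C)B⁺` and
`‖(1 − Q)P‖ ≤ ‖B⁺‖ ‖B − C‖`; exchanging `B` and `C` gives the bound with `‖C⁺‖`.
-/

open ContinuousLinearMap Module
open scoped InnerProductSpace

theorem LinearMap.mul_norm_sq_le_norm_adjoint_apply_sq {𝕜 E F : Type*} [RCLike 𝕜]
    [NormedAddCommGroup E] [InnerProductSpace 𝕜 E] [FiniteDimensional 𝕜 E]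
    [NormedAddCommGroup F] [InnerProductSpace 𝕜 F] [FiniteDimensional 𝕜 F]
    (hEF : finrank 𝕜 E = finrank 𝕜 F) {T : E →ₗ[𝕜] F} {c : ℝ}
    (hT : ∀ x, c * ‖x‖ ^ 2 ≤ ‖T x‖ ^ 2) (y : F) : c * ‖y‖ ^ 2 ≤ ‖T.adjoint y‖ ^ 2 := by
  rcases le_or_gt c 0 with hc | hc
  · exact (mul_nonpos_of_nonpos_of_nonneg hc (by positivity)).trans (by positivity)
  have hinj : Function.Injective T := (injective_iff_map_eq_zero T).2 fun x hx => by
    have h := hT x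
    rw [hx, norm_zero, zero_pow two_ne_zero] at h
    simpa using nonpos_of_mul_nonpos_right h hc
  obtain ⟨x, rfl⟩ := (LinearMap.injective_iff_surjective_of_finrank_eq_finrank hEF).1 hinj y
  rcases eq_or_ne x 0 with rfl | hx
  · simp
  have hCS : ‖T x‖ ^ 2 ≤ ‖T.adjoint (T x)‖ * ‖x‖ := by
    rw [← inner_self_eq_norm_sq (𝕜 := 𝕜), ← LinearMap.adjoint_inner_left]
    exact re_inner_le_norm _ _
  refine le_of_mul_le_mul_right ?_ (by positivity : 0 < ‖x‖ ^ 2)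
  calc c * ‖T x‖ ^ 2 * ‖x‖ ^ 2 = (c * ‖x‖ ^ 2) * ‖T x‖ ^ 2 := by ring
    _ ≤ ‖T x‖ ^ 2 * ‖T x‖ ^ 2 := by gcongr; exact hT x
    _ ≤ (‖T.adjoint (T x)‖ * ‖x‖) ^ 2 := by rw [← sq]; gcongr
    _ = ‖T.adjoint (T x)‖ ^ 2 * ‖x‖ ^ 2 := by ring

section StarProjection

variable {𝕜 E : Type*} [RCLike 𝕜] [NormedAddCommGroup E] [InnerProductSpace 𝕜 E]
  [CompleteSpace E] {P Q : E →L[𝕜] E}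

namespace IsStarProjection

lemma apply_apply (hP : IsStarProjection P) (x : E) : P (P x) = P x :=
  congr($(hP.isIdempotentElem.eq) x)

lemma apply_eq_self_of_mem_range (hP : IsStarProjection P) {x : E} (hx : x ∈ P.range) :
    P x = x := by
  obtain ⟨y, rfl⟩ := hx
  exact hP.apply_apply y

lemma inner_apply_one_sub_apply (hP : IsStarProjection P) (x y : E) :
    ⟪P x, (1 - P) y⟫_𝕜 = 0 := by
  rw [← adjoint_inner_right, hP.isSelfAdjoint.adjoint_eq, ← mul_apply_eq_comp,
    hP.mul_one_sub_self, _root_.zero_apply, inner_zero_right]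

lemma norm_apply_sq_add_norm_one_sub_apply_sq (hP : IsStarProjection P) (x : E) :
    ‖P x‖ ^ 2 + ‖(1 - P) x‖ ^ 2 = ‖x‖ ^ 2 := by
  have h := norm_add_sq (𝕜 := 𝕜) (P x) ((1 - P) x)
  rwa [hP.inner_apply_one_sub_apply, map_zero, mul_zero, add_zero, ← _root_.add_apply,
    add_sub_cancel, one_apply_eq_self, eq_comm] at h

lemma norm_apply_le (hP : IsStarProjection P) (x : E) : ‖P x‖ ≤ ‖x‖ := by
  simpa using P.le_of_opNorm_le hP.norm_le x

theorem norm_sub_le_max (hP : IsStarProjection P) (hQ : IsStarProjection Q) :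
    ‖P - Q‖ ≤ max ‖(1 - Q) * P‖ ‖(1 - P) * Q‖ := by
  set M := max ‖(1 - Q) * P‖ ‖(1 - P) * Q‖
  have hQP : ‖Q * (1 - P)‖ = ‖(1 - P) * Q‖ := by
    rw [← norm_star, star_mul, hQ.isSelfAdjoint.star_eq, hP.one_sub.isSelfAdjoint.star_eq]
  refine opNorm_le_bound _ (le_max_of_le_left (norm_nonneg _)) fun x => ?_
  set u := (1 - Q) (P x)
  set v := Q ((1 - P) x)
  have hsplit : (P - Q) x = u - v := by simp [u, v]
  have hu : ‖u‖ ≤ M * ‖P x‖ := by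
    have := ((1 - Q) * P).le_opNorm (P x)
    rw [mul_apply_eq_comp, hP.apply_apply] at this
    exact this.trans (by gcongr; exact le_max_left _ _)
  have hv : ‖v‖ ≤ M * ‖(1 - P) x‖ := by
    have := (Q * (1 - P)).le_opNorm ((1 - P) x)
    rw [mul_apply_eq_comp, hP.one_sub.apply_apply, hQP] at this
    exact this.trans (by gcongr; exact le_max_right _ _)
  have horth : ⟪v, u⟫_𝕜 = 0 := hQ.inner_apply_one_sub_apply _ _
  rw [← sq_le_sq₀ (norm_nonneg _) (by positivity), hsplit, norm_sub_eq_norm_add horth,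
    norm_add_sq (𝕜 := 𝕜), inner_eq_zero_symm.mp horth, map_zero, mul_zero, add_zero]
  calc ‖u‖ ^ 2 + ‖v‖ ^ 2 ≤ (M * ‖P x‖) ^ 2 + (M * ‖(1 - P) x‖) ^ 2 := by gcongr
    _ = (M * ‖x‖) ^ 2 := by
      rw [mul_pow, mul_pow, ← mul_add, hP.norm_apply_sq_add_norm_one_sub_apply_sq, mul_pow]

theorem norm_one_sub_mul_le_of_finrank_range_eq [FiniteDimensional 𝕜 E] (hP : IsStarProjection P)
    (hQ : IsStarProjection Q) (h : finrank 𝕜 P.range = finrank 𝕜 Q.range) :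
    ‖(1 - Q) * P‖ ≤ ‖(1 - P) * Q‖ := by
  set b := ‖(1 - P) * Q‖
  have hP_lower : ∀ v ∈ Q.range, (1 - b ^ 2) * ‖v‖ ^ 2 ≤ ‖P v‖ ^ 2 := by
    rintro _ ⟨y, rfl⟩
    rw [coe_coe]
    have hb : ‖(1 - P) (Q y)‖ ≤ b * ‖Q y‖ := by
      simpa only [mul_apply_eq_comp, hQ.apply_apply] using ((1 - P) * Q).le_opNorm (Q y)
    have := hP.norm_apply_sq_add_norm_one_sub_apply_sq (Q y)
    nlinarith [pow_le_pow_left₀ (norm_nonneg _) hb 2]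
  let S : Q.range →ₗ[𝕜] P.range :=
    ((P : E →ₗ[𝕜] E).comp Q.range.subtype).codRestrict P.range fun v =>
      LinearMap.mem_range_self _ _
  let T : P.range →ₗ[𝕜] Q.range :=
    ((Q : E →ₗ[𝕜] E).comp P.range.subtype).codRestrict Q.range fun u =>
      LinearMap.mem_range_self _ _
  have hTS : T = S.adjoint := by
    rw [LinearMap.eq_adjoint_iff]
    rintro ⟨u, hu⟩ ⟨v, hv⟩
    simp only [Submodule.coe_inner, LinearMap.codRestrict_apply, LinearMap.coe_comp, coe_coe,
      Submodule.coe_subtype, Function.comp_apply, T, S]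
    calc ⟪Q u, v⟫_𝕜 = ⟪u, Q v⟫_𝕜 := hQ.isSelfAdjoint.isSymmetric u v
      _ = ⟪P u, v⟫_𝕜 := by
        rw [hQ.apply_eq_self_of_mem_range hv, hP.apply_eq_self_of_mem_range hu]
      _ = ⟪u, P v⟫_𝕜 := hP.isSelfAdjoint.isSymmetric u v
  have hQ_lower : ∀ u ∈ P.range, (1 - b ^ 2) * ‖u‖ ^ 2 ≤ ‖Q u‖ ^ 2 := fun u hu => by
    simpa [← hTS, T] using LinearMap.mul_norm_sq_le_norm_adjoint_apply_sq h.symm (T := S)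
      (fun v => hP_lower v v.2) ⟨u, hu⟩
  refine opNorm_le_bound _ (norm_nonneg _) fun x => ?_
  rw [← sq_le_sq₀ (norm_nonneg _) (by positivity), mul_apply_eq_comp]
  have hpyth := hQ.norm_apply_sq_add_norm_one_sub_apply_sq (P x)
  calc ‖(1 - Q) (P x)‖ ^ 2 = ‖P x‖ ^ 2 - ‖Q (P x)‖ ^ 2 := by linarith
    _ ≤ b ^ 2 * ‖P x‖ ^ 2 := by linarith [hQ_lower (P x) ⟨x, rfl⟩]
    _ ≤ (b * ‖x‖) ^ 2 := by rw [mul_pow]; gcongr; exact hP.norm_apply_le x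

theorem norm_sub_le_of_finrank_range_eq [FiniteDimensional 𝕜 E] (hP : IsStarProjection P)
    (hQ : IsStarProjection Q) (h : finrank 𝕜 P.range = finrank 𝕜 Q.range) :
    ‖P - Q‖ ≤ ‖(1 - Q) * P‖ :=
  (hP.norm_sub_le_max hQ).trans <|
    max_le le_rfl (hQ.norm_one_sub_mul_le_of_finrank_range_eq hP h.symm)

end IsStarProjection

end StarProjection

section Matrix

open scoped Matrix.Norms.L2Operator

variable {𝕜 m n : Type*} [RCLike 𝕜] [Fintype m] [Fintype n]

theorem Matrix.isStarProjection_mul_of_mul_mul_eq_self {B : Matrix n m 𝕜} {B' : Matrix m n 𝕜}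
    (h₁ : B * B' * B = B) (h₃ : (B * B')ᴴ = B * B') : IsStarProjection (B * B') :=
  ⟨by rw [IsIdempotentElem, ← Matrix.mul_assoc, h₁], h₃⟩

theorem Matrix.rank_mul_of_mul_mul_eq_self {B : Matrix n m 𝕜} {B' : Matrix m n 𝕜}
    (h₁ : B * B' * B = B) : (B * B').rank = B.rank :=
  (rank_mul_le_left B B').antisymm (by simpa only [h₁] using rank_mul_le_left (B * B') B)

variable [DecidableEq n]

theorem Matrix.rank_eq_finrank_range_toEuclideanCLM (A : Matrix n n 𝕜) :
    A.rank = finrank 𝕜 (toEuclideanCLM (n := n) (𝕜 := 𝕜) A).range :=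
  rank_eq_finrank_range_toLin A (PiLp.basisFun 2 𝕜 n) (PiLp.basisFun 2 𝕜 n)

theorem IsStarProjection.norm_sub_le_of_rank_eq {P Q : Matrix n n 𝕜} (hP : IsStarProjection P)
    (hQ : IsStarProjection Q) (h : P.rank = Q.rank) : ‖P - Q‖ ≤ ‖(1 - Q) * P‖ := by
  simp only [cstar_norm_def, map_sub, map_mul, map_one]
  refine (hP.map toEuclideanCLM).norm_sub_le_of_finrank_range_eq (hQ.map toEuclideanCLM) ?_
  rwa [← rank_eq_finrank_range_toEuclideanCLM, ← rank_eq_finrank_range_toEuclideanCLM]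

variable [DecidableEq m]

theorem IsStarProjection.norm_mul_mul_le_of_mul_eq_zero {Q : Matrix n n 𝕜}
    (hQ : IsStarProjection Q) {B C : Matrix n m 𝕜} (hQC : Q * C = 0) (B' : Matrix m n 𝕜) :
    ‖Q * (B * B')‖ ≤ ‖B'‖ * ‖B - C‖ :=
  calc ‖Q * (B * B')‖ = ‖Q * (B - C) * B'‖ := by
        rw [Matrix.mul_sub, hQC, sub_zero, Matrix.mul_assoc]
    _ ≤ ‖Q‖ * ‖B - C‖ * ‖B'‖ := (l2_opNorm_mul _ _).trans (by gcongr; exact l2_opNorm_mul _ _)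
    _ ≤ 1 * ‖B - C‖ * ‖B'‖ := by gcongr; exact hQ.norm_le
    _ = ‖B'‖ * ‖B - C‖ := by ring

theorem Matrix.norm_mul_sub_mul_le_of_rank_eq {B C : Matrix n m 𝕜} {B' C' : Matrix m n 𝕜}
    (hB₁ : B * B' * B = B) (hB₃ : (B * B')ᴴ = B * B') (hC₁ : C * C' * C = C)
    (hC₃ : (C * C')ᴴ = C * C') (h : B.rank = C.rank) :
    ‖B * B' - C * C'‖ ≤ ‖B'‖ * ‖B - C‖ := by
  have hP := isStarProjection_mul_of_mul_mul_eq_self hB₁ hB₃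
  have hQ := isStarProjection_mul_of_mul_mul_eq_self hC₁ hC₃
  have hrank : (B * B').rank = (C * C').rank := by
    rw [rank_mul_of_mul_mul_eq_self hB₁, rank_mul_of_mul_mul_eq_self hC₁, h]
  have hQC : (1 - C * C') * C = 0 := by rw [Matrix.sub_mul, Matrix.one_mul, hC₁, sub_self]
  calc ‖B * B' - C * C'‖ ≤ ‖(1 - C * C') * (B * B')‖ := hP.norm_sub_le_of_rank_eq hQ hrank
    _ ≤ ‖B'‖ * ‖B - C‖ := hQ.one_sub.norm_mul_mul_le_of_mul_eq_zero hQC B'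

theorem specNorm_eq_l2_opNorm {p q : ℕ} (M : Matrix (Fin p) (Fin q) ℂ) : specNorm M = ‖M‖ := rfl

end Matrix

theorem stmt7_general (p q : ℕ) (B C : Matrix (Fin p) (Fin q) ℂ)
    (Bp Cp : Matrix (Fin q) (Fin p) ℂ)
    (hB1 : B * Bp * B = B)
    (hB3 : (B * Bp)ᴴ = B * Bp)
    (hC1 : C * Cp * C = C)
    (hC3 : (C * Cp)ᴴ = C * Cp)
    (hrank : B.rank = C.rank) :
    specNorm ((1 - B * Bp) - (1 - C * Cp)) ≤
      min (specNorm Bp) (specNorm Cp) * specNorm (B - C) := by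
  open scoped Matrix.Norms.L2Operator in
  · simp only [specNorm_eq_l2_opNorm]
    rw [sub_sub_sub_cancel_left, min_mul_of_nonneg _ _ (norm_nonneg _)]
    refine le_min ?_ ?_
    · rw [norm_sub_rev]
      exact Matrix.norm_mul_sub_mul_le_of_rank_eq hB1 hB3 hC1 hC3 hrank
    · rw [norm_sub_rev B C]
      exact Matrix.norm_mul_sub_mul_le_of_rank_eq hC1 hC3 hB1 hB3 hrank.symm

/-- Stewart's perturbation bound: if `rank B = rank C` then
`‖Π⊥_B − Π⊥_C‖ ≤ min(‖B⁺‖, ‖C⁺‖) ‖B − C‖`, where `Π⊥_B = I − BB⁺` and `B⁺` is the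
Moore–Penrose pseudoinverse (specified via the four Penrose conditions). -/
theorem stmt7 (p q : ℕ) (B C : Matrix (Fin p) (Fin q) ℂ)
    (Bp Cp : Matrix (Fin q) (Fin p) ℂ)
    (hB1 : B * Bp * B = B) (hB2 : Bp * B * Bp = Bp)
    (hB3 : (B * Bp)ᴴ = B * Bp) (hB4 : (Bp * B)ᴴ = Bp * B)
    (hC1 : C * Cp * C = C) (hC2 : Cp * C * Cp = Cp)
    (hC3 : (C * Cp)ᴴ = C * Cp) (hC4 : (Cp * C)ᴴ = Cp * C)
    (hrank : B.rank = C.rank) :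
    specNorm ((1 - B * Bp) - (1 - C * Cp)) ≤
      min (specNorm Bp) (specNorm Cp) * specNorm (B - C) :=
  stmt7_general p q B C Bp Cp hB1 hB3 hC1 hC3 hrank
end

section
/- Fix integers n_t ≥ 1, T ≥ 1, n_r ≥ n_t, real r with 0 ≤ r ≤ n_t, and let d ≥ 0. Consider the optimization: maximize F(α) = ∑_{i=1}^{n_t} T · max(min(r/n_t − 1 + α_i, r/n_t), 0) subject to ∑_{i=1}^{n_t} (n_r − n_t + 2i − 1) α_i ≤ d and α_1 ≥ α_2 ≥ ... ≥ α_{n_t} ≥ 0. If d equals the optimal DMT diversity d(r) (the piecewise-linear function with d(k) = (n_t−k)(n_r−k) at integers k and linear in between), then for integer r = k the maximal value is T·k·(n_t−k)/n_t. -/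
lemma sum_fin_ite {n m : ℕ} (hm : m ≤ n) (f : ℕ → ℝ) :
    ∑ i : Fin n, (if (i : ℕ) < m then f (i : ℕ) else 0) = ∑ i ∈ Finset.range m, f i := by
  rw [Fin.sum_univ_eq_sum_range (fun i => if i < m then f i else 0)]
  rw [← Finset.sum_subset (Finset.range_subset_range.mpr hm)
      (fun i _ hi => if_neg (by simpa using hi))]
  exact Finset.sum_congr rfl fun i hi => if_pos (Finset.mem_range.mp hi)

lemma sum_range_w (a : ℝ) (m : ℕ) :
    ∑ i ∈ Finset.range m, (a + 2 * (i : ℝ) + 1) = m * (a + m) := by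
  induction m with
  | zero => simp
  | succ n ih => rw [Finset.sum_range_succ, ih]; push_cast; ring

set_option maxHeartbeats 800000 in
/-- For a DMT optimal code with diversity `d(k) = (n_t−k)(n_r−k)` at integer multiplexing
gain `r = k`, the value of the optimization in Theorem 2 is `T k (n_t−k)/n_t`:
it is the greatest value of `∑ i, T · max(min(k/n_t − 1 + α_i, k/n_t), 0)` over feasible
`α` with `∑ i, (n_r − n_t + 2i − 1) α_i ≤ (n_t−k)(n_r−k)` and `α_1 ≥ ... ≥ α_{n_t} ≥ 0`
(here the sum coefficient for the 0-indexed `i` is `n_r − n_t + 2(i+1) − 1 = n_r − n_t + 2i + 1`). -/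
theorem stmt11 (nt T nr k : ℕ) (hnt : 1 ≤ nt) (hT : 1 ≤ T) (hnr : nt ≤ nr) (hk : k ≤ nt) :
    IsGreatest
      {y : ℝ | ∃ α : Fin nt → ℝ,
        (∀ i j : Fin nt, i ≤ j → α j ≤ α i) ∧ (∀ i, 0 ≤ α i) ∧
        (∑ i : Fin nt, ((nr : ℝ) - (nt : ℝ) + 2 * ((i : ℕ) : ℝ) + 1) * α i)
          ≤ ((nt : ℝ) - (k : ℝ)) * ((nr : ℝ) - (k : ℝ)) ∧
        y = ∑ i : Fin nt, (T : ℝ) *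
          max (min ((k : ℝ) / (nt : ℝ) - 1 + α i) ((k : ℝ) / (nt : ℝ))) 0}
      ((T : ℝ) * (k : ℝ) * ((nt : ℝ) - (k : ℝ)) / (nt : ℝ)) := by
  have hnt0 : (0:ℝ) < nt := by exact_mod_cast hnt
  have hkR : (k:ℝ) ≤ nt := by exact_mod_cast hk
  have hnrR : (nt:ℝ) ≤ nr := by exact_mod_cast hnr
  set c : ℝ := (k:ℝ)/nt with hc
  have hc0 : 0 ≤ c := by positivity
  have hc1 : c ≤ 1 := by rw [hc, div_le_one hnt0]; exact hkR
  set m := nt - k with hm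
  have hmn : m ≤ nt := Nat.sub_le nt k
  have hmR : (m:ℝ) = (nt:ℝ) - k := by
    rw [hm, Nat.cast_sub hk]
  have hDsum : ∑ i : Fin nt, (if (i : ℕ) < m then ((nr:ℝ) - nt + 2*(i:ℕ) + 1) else 0)
      = ((nt:ℝ) - k) * ((nr:ℝ) - k) := by
    rw [sum_fin_ite hmn (fun i => (nr:ℝ) - nt + 2*(i:ℕ) + 1), sum_range_w, hmR]
    ring
  have hmsum : ∑ i : Fin nt, (if (i : ℕ) < m then (1:ℝ) else 0) = (m:ℝ) := by
    rw [sum_fin_ite hmn (fun _ => (1:ℝ)), Finset.sum_const, Finset.card_range]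
    simp
  constructor
  · refine ⟨fun i => if (i:ℕ) < m then 1 else 0, ?_, ?_, ?_, ?_⟩
    · intro i j hij
      have hij' : (i:ℕ) ≤ (j:ℕ) := hij
      by_cases hj : (j:ℕ) < m
      · have hi : (i:ℕ) < m := lt_of_le_of_lt hij' hj
        simp [hi, hj]
      · simp only [hj, if_false]
        split_ifs <;> norm_num
    · intro i; dsimp only; split_ifs <;> norm_num
    · have : ∀ i : Fin nt, ((nr:ℝ) - nt + 2*(i:ℕ) + 1) * (if (i:ℕ) < m then (1:ℝ) else 0)
          = (if (i : ℕ) < m then ((nr:ℝ) - nt + 2*(i:ℕ) + 1) else 0) := by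
        intro i; split_ifs <;> ring
      rw [Finset.sum_congr rfl (fun i _ => this i), hDsum]
    · have hterm : ∀ i : Fin nt,
          (T:ℝ) * max (min (c - 1 + (if (i:ℕ) < m then (1:ℝ) else 0)) c) 0
          = (if (i:ℕ) < m then (T:ℝ) * c else 0) := by
        intro i
        split_ifs with h
        · rw [show c - 1 + (1:ℝ) = c by ring, min_self, max_eq_left hc0]
        · rw [add_zero, min_eq_left (by linarith), max_eq_right (by linarith), mul_zero]
      rw [Finset.sum_congr rfl (fun i _ => hterm i)]
      have : ∑ i : Fin nt, (if (i:ℕ) < m then (T:ℝ) * c else 0)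
          = (T:ℝ) * c * (m:ℝ) := by
        have e : ∀ i : Fin nt, (if (i:ℕ) < m then (T:ℝ) * c else 0)
            = (T:ℝ) * c * (if (i:ℕ) < m then (1:ℝ) else 0) := by
          intro i; split_ifs <;> ring
        rw [Finset.sum_congr rfl (fun i _ => e i), ← Finset.mul_sum, hmsum]
      rw [this, hmR, hc]
      field_simp
  · rintro y ⟨α, hanti, hpos, hcon, rfl⟩
    set W : ℝ := (nr:ℝ) + nt - 2*k + 1 with hW
    have hW1 : 1 ≤ W := by rw [hW]; nlinarith
    have key : ∀ i : Fin nt,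
        W * (min (α i) 1 - (if (i:ℕ) < m then (1:ℝ) else 0))
        ≤ ((nr:ℝ) - nt + 2*(i:ℕ) + 1) * α i
          - (if (i:ℕ) < m then ((nr:ℝ) - nt + 2*(i:ℕ) + 1) else 0) := by
      intro i
      have hi0 : (0:ℝ) ≤ ((i:ℕ):ℝ) := Nat.cast_nonneg _
      split_ifs with h
      · -- i < m : w_i ≤ W
        have hiR : ((i:ℕ):ℝ) ≤ (nt:ℝ) - k - 1 := by
          have : (i:ℕ) + 1 ≤ m := h
          have : ((i:ℕ):ℝ) + 1 ≤ (m:ℝ) := by exact_mod_cast this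
          linarith [hmR ▸ this]
        have hwW : ((nr:ℝ) - nt + 2*(i:ℕ) + 1) ≤ W := by rw [hW]; linarith
        rcases le_total (α i) 1 with h1 | h1
        · rw [min_eq_left h1]; nlinarith
        · rw [min_eq_right h1]; nlinarith
      · have hiR : (nt:ℝ) - k ≤ ((i:ℕ):ℝ) := by
          have : m ≤ (i:ℕ) := le_of_not_gt h
          have : (m:ℝ) ≤ ((i:ℕ):ℝ) := by exact_mod_cast this
          linarith [hmR ▸ this]
        have hWw : W ≤ ((nr:ℝ) - nt + 2*(i:ℕ) + 1) := by rw [hW]; linarith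
        have hb0 : 0 ≤ min (α i) 1 := le_min (hpos i) zero_le_one
        have hba : min (α i) 1 ≤ α i := min_le_left _ _
        nlinarith
    have hsumkey := Finset.sum_le_sum (fun i (_ : i ∈ Finset.univ) => key i)
    have e1 : ∑ i : Fin nt, W * (min (α i) 1 - (if (i:ℕ) < m then (1:ℝ) else 0))
        = W * ((∑ i : Fin nt, min (α i) 1) - (m:ℝ)) := by
      rw [← hmsum, ← Finset.sum_sub_distrib, Finset.mul_sum]
    rw [e1, Finset.sum_sub_distrib, hDsum] at hsumkey
    have hβsum : ∑ i : Fin nt, min (α i) 1 ≤ (m:ℝ) := by nlinarith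
    have hterm : ∀ i : Fin nt, (T:ℝ) * max (min (c - 1 + α i) c) 0
        ≤ (T:ℝ) * c * min (α i) 1 := by
      intro i
      have hT0 : (0:ℝ) ≤ T := Nat.cast_nonneg T
      rcases le_total (α i) 1 with h1 | h1
      · rw [min_eq_left h1, mul_assoc]
        refine mul_le_mul_of_nonneg_left (max_le ?_ (mul_nonneg hc0 (hpos i))) hT0
        refine le_trans (min_le_left _ _) ?_
        have hq : c - 1 + α i - c * α i = -((1 - c) * (1 - α i)) := by ring
        have hp : 0 ≤ (1 - c) * (1 - α i) :=
          mul_nonneg (by linarith) (by linarith)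
        linarith
      · rw [min_eq_right h1, mul_one]
        exact mul_le_mul_of_nonneg_left (max_le (min_le_right _ _) hc0) hT0
    calc ∑ i : Fin nt, (T:ℝ) * max (min (c - 1 + α i) c) 0
        ≤ ∑ i : Fin nt, (T:ℝ) * c * min (α i) 1 :=
          Finset.sum_le_sum fun i _ => hterm i
      _ = (T:ℝ) * c * ∑ i : Fin nt, min (α i) 1 := by rw [← Finset.mul_sum]
      _ ≤ (T:ℝ) * c * (m:ℝ) :=
          mul_le_mul_of_nonneg_left hβsum (by positivity)
      _ = (T:ℝ) * k * ((nt:ℝ) - k) / nt := by rw [hmR, hc]; field_simp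
end

section
/- Fix integers n_t ≥ 1, T ≥ 1, n_r ≥ n_t, and real r ∈ [0, n_t]. Let k = ⌊r⌋ and let d(r) be the piecewise linear function connecting the points (j, (n_t−j)(n_r−j)), j = 0, ..., n_t. Then the maximum of ∑_{i=1}^{n_t} T·max(min(r/n_t − 1 + α_i, r/n_t), 0) over α with ∑_{i=1}^{n_t}(n_r−n_t+2i−1)α_i ≤ d(r) and α_1 ≥ ... ≥ α_{n_t} ≥ 0 equals (T/n_t)·( r(n_t − k − 1) + max(n_t·k − r(n_t−1), 0) ). -/
lemma lower_eq_range (S : Finset ℕ) (h : ∀ a b : ℕ, a ≤ b → b ∈ S → a ∈ S) :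
    S = Finset.range S.card := by
  ext n
  constructor
  · intro hn
    have hsub : Finset.range (n + 1) ⊆ S := by
      intro x hx
      exact h x n (by simpa using Nat.lt_succ_iff.mp (Finset.mem_range.mp hx)) hn
    have := Finset.card_le_card hsub
    simp only [Finset.card_range] at this
    exact Finset.mem_range.mpr this
  · intro hn
    by_contra hns
    have hsub : S ⊆ Finset.range n := by
      intro b hb
      rcases lt_or_ge b n with hbn | hbn
      · exact Finset.mem_range.mpr hbn
      · exact absurd (h n b hbn hb) hns
    have h2 := Finset.card_le_card hsub
    simp only [Finset.card_range] at h2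
    exact absurd (Finset.mem_range.mp hn) (by omega)

lemma gauss_sum (a : ℝ) (m : ℕ) :
    ∑ n ∈ Finset.range m, (a + 2 * (n : ℝ) + 1) = m * (a + m) := by
  induction m with
  | zero => simp
  | succ m ih =>
    rw [Finset.sum_range_succ, ih]
    push_cast
    ring

lemma perterm (ρ γ x : ℝ) (hρ0 : 0 ≤ ρ) (hρ1 : ρ ≤ 1) (hγ : 0 ≤ γ)
    (hx : 1 - ρ ≤ x) :
    max (min (ρ - 1 + x) ρ) 0 ≤ ρ - min γ 1 + γ * x := by
  rcases le_total γ 1 with hγ1 | hγ1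
  · rw [min_eq_left hγ1]
    apply max_le
    · rcases le_total x 1 with hx1 | hx1
      · exact le_trans (min_le_left _ _) (by nlinarith)
      · exact le_trans (min_le_right _ _) (by nlinarith)
    · nlinarith
  · rw [min_eq_right hγ1]
    apply max_le
    · exact le_trans (min_le_left _ _) (by nlinarith)
    · nlinarith

set_option maxHeartbeats 1000000 in
/-- Theorem 3 (general multiplexing gain): with `k = ⌊r⌋` and `d(r)` the piecewise
linear function connecting the points `(k, (n_t−k)(n_r−k))`, the maximum of
`∑ i, T·max(min(r/n_t − 1 + α_i, r/n_t), 0)` over `α` with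
`∑ i, (n_r−n_t+2i−1) α_i ≤ d(r)` and `α_1 ≥ ... ≥ α_{n_t} ≥ 0` equals
`(T/n_t)( r(n_t − k − 1) + max(n_t k − r(n_t−1), 0) )`. -/
theorem stmt12 (nt T nr : ℕ) (hnt : 1 ≤ nt) (hT : 1 ≤ T) (hnr : nt ≤ nr)
    (r : ℝ) (hr0 : 0 ≤ r) (hr : r ≤ (nt : ℝ)) :
    IsGreatest
      {y : ℝ | ∃ α : Fin nt → ℝ,
        (∀ i j : Fin nt, i ≤ j → α j ≤ α i) ∧ (∀ i, 0 ≤ α i) ∧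
        (∑ i : Fin nt, ((nr : ℝ) - (nt : ℝ) + 2 * ((i : ℕ) : ℝ) + 1) * α i)
          ≤ ((nt : ℝ) - (⌊r⌋ : ℝ)) * ((nr : ℝ) - (⌊r⌋ : ℝ)) +
            (r - (⌊r⌋ : ℝ)) *
              (((nt : ℝ) - (⌊r⌋ : ℝ) - 1) * ((nr : ℝ) - (⌊r⌋ : ℝ) - 1) -
                ((nt : ℝ) - (⌊r⌋ : ℝ)) * ((nr : ℝ) - (⌊r⌋ : ℝ))) ∧
        y = ∑ i : Fin nt, (T : ℝ) *
          max (min (r / (nt : ℝ) - 1 + α i) (r / (nt : ℝ))) 0}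
      ((T : ℝ) / (nt : ℝ) *
        (r * ((nt : ℝ) - (⌊r⌋ : ℝ) - 1) +
          max ((nt : ℝ) * (⌊r⌋ : ℝ) - r * ((nt : ℝ) - 1)) 0)) := by
  have hnt0 : (0 : ℝ) < nt := by exact_mod_cast hnt
  have hT0 : (0 : ℝ) ≤ T := by positivity
  constructor
  · -- membership
    rcases eq_or_lt_of_le hr with hrnt | hrnt
    · -- r = nt
      refine ⟨fun _ => 0, fun i j _ => le_refl 0, fun i => le_refl 0, ?_, ?_⟩
      · have hfl : (⌊r⌋ : ℝ) = (nt : ℝ) := by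
          rw [hrnt, Int.floor_natCast]; norm_num
        rw [hfl, hrnt]
        simp
      · have hfl : (⌊r⌋ : ℝ) = (nt : ℝ) := by
          rw [hrnt, Int.floor_natCast]; norm_num
        rw [hfl, hrnt]
        have h1 : (nt : ℝ) / nt = 1 := div_self (ne_of_gt hnt0)
        have h2 : (nt:ℝ) * nt - nt * ((nt:ℝ) - 1) = nt := by ring
        rw [h1, h2, max_eq_left (le_of_lt hnt0)]
        simp
    · -- r < nt : explicit maximizer
      have hk0 : (0 : ℤ) ≤ ⌊r⌋ := Int.floor_nonneg.mpr hr0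
      set K : ℕ := (⌊r⌋).toNat with hKdef
      have hKr : ((K : ℕ) : ℝ) = ((⌊r⌋ : ℤ) : ℝ) := by
        rw [hKdef]; exact_mod_cast congrArg Int.cast (Int.toNat_of_nonneg hk0)
      have hKler : (K : ℝ) ≤ r := by rw [hKr]; exact Int.floor_le r
      have hrltK : r < (K : ℝ) + 1 := by rw [hKr]; exact Int.lt_floor_add_one r
      have hKnt : K < nt := by
        have : (K : ℝ) < nt := lt_of_le_of_lt hKler hrnt
        exact_mod_cast this
      set m : ℕ := nt - K - 1 with hmdef
      have hmnt : m + K + 1 = nt := by omega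
      have hmR : (m : ℝ) = (nt : ℝ) - K - 1 := by
        have h : ((m:ℝ)) + K + 1 = nt := by exact_mod_cast hmnt
        linarith
      set g : ℕ → ℝ := fun n => if n < m then 1 else if n = m then (K : ℝ) + 1 - r else 0
        with hgdef
      have hs0 : 0 ≤ (K : ℝ) + 1 - r := by linarith
      have hs1 : (K : ℝ) + 1 - r ≤ 1 := by linarith
      have hg01 : ∀ n, 0 ≤ g n ∧ g n ≤ 1 := by
        intro n
        simp only [hgdef]
        split <;> [skip; split] <;> norm_num <;> constructor <;> linarith
      refine ⟨fun i => g i.val, ?_, fun i => (hg01 i.val).1, ?_, ?_⟩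
      · intro i j hij
        have hij' : (i : ℕ) ≤ (j : ℕ) := hij
        simp only [hgdef]
        rcases lt_or_ge (i : ℕ) m with hi | hi
        · rw [if_pos hi]; exact (hg01 (j : ℕ)).2
        · rw [if_neg (not_lt.mpr hi)]
          have hjm : ¬ (j : ℕ) < m := by omega
          rw [if_neg hjm]
          rcases eq_or_ne (i : ℕ) m with hieq | hine
          · rw [if_pos hieq]
            split
            · exact le_refl _
            · exact hs0
          · rw [if_neg hine]
            have : (j : ℕ) ≠ m := by omega
            rw [if_neg this]
      · -- budget constraint: equality with d(r)
        have hsum : (∑ i : Fin nt, ((nr : ℝ) - (nt : ℝ) + 2 * ((i : ℕ) : ℝ) + 1) * g i.val)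
            = ∑ n ∈ Finset.range nt, ((nr : ℝ) - (nt : ℝ) + 2 * (n : ℝ) + 1) * g n :=
          Fin.sum_univ_eq_sum_range (fun n => ((nr : ℝ) - (nt : ℝ) + 2 * (n : ℝ) + 1) * g n) nt
        rw [hsum]
        have hstep : ∑ n ∈ Finset.range (m+1), ((nr : ℝ) - (nt : ℝ) + 2 * (n : ℝ) + 1) * g n
            = ∑ n ∈ Finset.range nt, ((nr : ℝ) - (nt : ℝ) + 2 * (n : ℝ) + 1) * g n := by
          apply Finset.sum_subset (Finset.range_subset_range.mpr (by omega))
          intro x hx hxn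
          have hx1 : ¬ x < m := by simp only [Finset.mem_range] at hxn; omega
          have hx2 : x ≠ m := by simp only [Finset.mem_range] at hxn; omega
          simp [hgdef, hx1, hx2]
        rw [← hstep, Finset.sum_range_succ]
        have hgm : g m = (K : ℝ) + 1 - r := by simp [hgdef]
        have hgsm : ∀ n ∈ Finset.range m,
            ((nr : ℝ) - (nt : ℝ) + 2 * (n : ℝ) + 1) * g n
            = ((nr : ℝ) - (nt : ℝ) + 2 * (n : ℝ) + 1) := by
          intro n hn
          rw [hgdef]; simp only [Finset.mem_range.mp hn, if_pos]
          ring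
        rw [Finset.sum_congr rfl hgsm, gauss_sum ((nr : ℝ) - (nt : ℝ)) m, hgm, ← hKr]
        apply le_of_eq
        rw [hmR]
        ring
      · -- value equality
        have hsum : (∑ i : Fin nt, (T : ℝ) *
              max (min (r / (nt : ℝ) - 1 + g i.val) (r / (nt : ℝ))) 0)
            = ∑ n ∈ Finset.range nt, (T : ℝ) *
              max (min (r / (nt : ℝ) - 1 + g n) (r / (nt : ℝ))) 0 :=
          Fin.sum_univ_eq_sum_range (fun n => (T : ℝ) *
            max (min (r / (nt : ℝ) - 1 + g n) (r / (nt : ℝ))) 0) nt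
        rw [hsum]
        have hρ0 : 0 ≤ r / (nt:ℝ) := by positivity
        have hρ1 : r / (nt:ℝ) ≤ 1 := by
          rw [div_le_one hnt0]; exact hr
        have hstep : ∑ n ∈ Finset.range (m+1), (T : ℝ) *
              max (min (r / (nt : ℝ) - 1 + g n) (r / (nt : ℝ))) 0
            = ∑ n ∈ Finset.range nt, (T : ℝ) *
              max (min (r / (nt : ℝ) - 1 + g n) (r / (nt : ℝ))) 0 := by
          apply Finset.sum_subset (Finset.range_subset_range.mpr (by omega))
          intro x hx hxn
          have hx1 : ¬ x < m := by simp only [Finset.mem_range] at hxn; omega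
          have hx2 : x ≠ m := by simp only [Finset.mem_range] at hxn; omega
          have hgx : g x = 0 := by simp [hgdef, hx1, hx2]
          rw [hgx]
          have : min (r / (nt:ℝ) - 1 + 0) (r / (nt:ℝ)) = r / (nt:ℝ) - 1 + 0 :=
            min_eq_left (by linarith)
          rw [this, max_eq_right (by linarith)]
          ring
        rw [← hstep, Finset.sum_range_succ]
        have hgm : g m = (K : ℝ) + 1 - r := by simp [hgdef]
        have hterm : ∀ n ∈ Finset.range m, (T : ℝ) *
              max (min (r / (nt : ℝ) - 1 + g n) (r / (nt : ℝ))) 0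
            = (T : ℝ) * (r / (nt:ℝ)) := by
          intro n hn
          have hgn : g n = 1 := by simp [hgdef, Finset.mem_range.mp hn]
          rw [hgn]
          have h1 : r / (nt:ℝ) - 1 + 1 = r / (nt:ℝ) := by ring
          rw [h1, min_self, max_eq_left hρ0]
        rw [Finset.sum_congr rfl hterm, Finset.sum_const, Finset.card_range, hgm]
        have hminm : min (r / (nt:ℝ) - 1 + ((K:ℝ) + 1 - r)) (r / (nt:ℝ))
            = r / (nt:ℝ) + (K:ℝ) - r := by
          rw [min_eq_left (by linarith)]; ring
        rw [hminm, ← hKr]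
        have hq : r / (nt:ℝ) + (K:ℝ) - r = ((nt:ℝ) * K - r * ((nt:ℝ) - 1)) / nt := by
          field_simp; ring
        rw [hq]
        rcases le_total ((nt:ℝ) * K - r * ((nt:ℝ) - 1)) 0 with hqs | hqs
        · rw [max_eq_right hqs, max_eq_right (div_nonpos_of_nonpos_of_nonneg hqs (le_of_lt hnt0))]
          rw [nsmul_eq_mul, hmR]
          field_simp
          ring
        · rw [max_eq_left hqs, max_eq_left (by positivity)]
          rw [nsmul_eq_mul, hmR]
          field_simp
  · -- upper bound
    rintro y ⟨α, hmono, hnn, hbud, hy⟩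
    set β : ℕ → ℝ := fun n => if h : n < nt then α ⟨n, h⟩ else 0 with hβdef
    have hβnn : ∀ n, 0 ≤ β n := by
      intro n
      simp only [hβdef]
      split
      · exact hnn _
      · exact le_refl 0
    have hβmono : ∀ a b : ℕ, a ≤ b → b < nt → β b ≤ β a := by
      intro a b hab hb
      have ha : a < nt := lt_of_le_of_lt (Nat.lt_succ_iff.mp (Nat.lt_succ_of_le hab)) hb
      simp only [hβdef, dif_pos hb, dif_pos ha]
      exact hmono ⟨a, ha⟩ ⟨b, hb⟩ (Fin.mk_le_mk.mpr hab)
    have hβα : ∀ i : Fin nt, β i.val = α i := by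
      intro i
      simp [hβdef, i.isLt]
    have hy' : y = ∑ n ∈ Finset.range nt,
        (T : ℝ) * max (min (r / (nt : ℝ) - 1 + β n) (r / (nt : ℝ))) 0 := by
      rw [hy, ← Fin.sum_univ_eq_sum_range (fun n => (T : ℝ) *
        max (min (r / (nt : ℝ) - 1 + β n) (r / (nt : ℝ))) 0) nt]
      exact Finset.sum_congr rfl (fun i _ => by rw [hβα i])
    have hbud' : ∑ n ∈ Finset.range nt, ((nr : ℝ) - (nt : ℝ) + 2 * (n : ℝ) + 1) * β n
        ≤ ((nt : ℝ) - (⌊r⌋ : ℝ)) * ((nr : ℝ) - (⌊r⌋ : ℝ)) +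
            (r - (⌊r⌋ : ℝ)) *
              (((nt : ℝ) - (⌊r⌋ : ℝ) - 1) * ((nr : ℝ) - (⌊r⌋ : ℝ) - 1) -
                ((nt : ℝ) - (⌊r⌋ : ℝ)) * ((nr : ℝ) - (⌊r⌋ : ℝ))) := by
      refine le_trans (le_of_eq ?_) hbud
      rw [← Fin.sum_univ_eq_sum_range (fun n =>
        ((nr : ℝ) - (nt : ℝ) + 2 * (n : ℝ) + 1) * β n) nt]
      exact Finset.sum_congr rfl (fun i _ => by rw [hβα i])
    have hcn0 : ∀ n : ℕ, (1:ℝ) ≤ (nr : ℝ) - (nt : ℝ) + 2 * (n : ℝ) + 1 := by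
      intro n
      have h1 : (nt : ℝ) ≤ nr := by exact_mod_cast hnr
      have h2 : (0:ℝ) ≤ (n:ℝ) := Nat.cast_nonneg n
      linarith
    have hρ0 : 0 ≤ r / (nt:ℝ) := by positivity
    have hρ1 : r / (nt:ℝ) ≤ 1 := by rw [div_le_one hnt0]; exact hr
    rcases eq_or_lt_of_le hr with hrnt | hrnt
    · -- r = nt : budget forces everything to 0
      have hfl : (⌊r⌋ : ℝ) = (nt : ℝ) := by
        rw [hrnt, Int.floor_natCast]; norm_num
      have hD0 : ((nt : ℝ) - (⌊r⌋ : ℝ)) * ((nr : ℝ) - (⌊r⌋ : ℝ)) +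
            (r - (⌊r⌋ : ℝ)) *
              (((nt : ℝ) - (⌊r⌋ : ℝ) - 1) * ((nr : ℝ) - (⌊r⌋ : ℝ) - 1) -
                ((nt : ℝ) - (⌊r⌋ : ℝ)) * ((nr : ℝ) - (⌊r⌋ : ℝ))) = 0 := by
        rw [hfl, hrnt]; ring
      have htgt : (T : ℝ) / (nt : ℝ) *
          (r * ((nt : ℝ) - (⌊r⌋ : ℝ) - 1) +
            max ((nt : ℝ) * (⌊r⌋ : ℝ) - r * ((nt : ℝ) - 1)) 0) = 0 := by
        rw [hfl, ← hrnt]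
        have h2 : r * r - r * (r - 1) = r := by ring
        rw [h2, max_eq_left (by rw [hrnt]; exact le_of_lt hnt0)]
        ring
      rw [htgt, hy']
      have hterm : ∀ n ∈ Finset.range nt,
          (T : ℝ) * max (min (r / (nt : ℝ) - 1 + β n) (r / (nt : ℝ))) 0
          ≤ (T : ℝ) * (((nr : ℝ) - (nt : ℝ) + 2 * (n : ℝ) + 1) * β n) := by
        intro n _
        apply mul_le_mul_of_nonneg_left _ hT0
        apply max_le
        · refine le_trans (min_le_left _ _) ?_
          have := hcn0 n
          have := hβnn n
          nlinarith
        · exact mul_nonneg (le_trans zero_le_one (hcn0 n)) (hβnn n)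
      calc ∑ n ∈ Finset.range nt,
            (T : ℝ) * max (min (r / (nt : ℝ) - 1 + β n) (r / (nt : ℝ))) 0
          ≤ ∑ n ∈ Finset.range nt,
            (T : ℝ) * (((nr : ℝ) - (nt : ℝ) + 2 * (n : ℝ) + 1) * β n) :=
            Finset.sum_le_sum hterm
        _ = (T : ℝ) * ∑ n ∈ Finset.range nt,
            ((nr : ℝ) - (nt : ℝ) + 2 * (n : ℝ) + 1) * β n := by
            rw [Finset.mul_sum]
        _ ≤ (T : ℝ) * 0 := by
            apply mul_le_mul_of_nonneg_left _ hT0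
            rw [← hD0]; exact hbud'
        _ = 0 := by ring
    · -- r < nt : main case
      have hk0 : (0 : ℤ) ≤ ⌊r⌋ := Int.floor_nonneg.mpr hr0
      set K : ℕ := (⌊r⌋).toNat with hKdef
      have hKr : ((K : ℕ) : ℝ) = ((⌊r⌋ : ℤ) : ℝ) := by
        rw [hKdef]; exact_mod_cast congrArg Int.cast (Int.toNat_of_nonneg hk0)
      have hKler : (K : ℝ) ≤ r := by rw [hKr]; exact Int.floor_le r
      have hrltK : r < (K : ℝ) + 1 := by rw [hKr]; exact Int.lt_floor_add_one r
      have hKnt : K < nt := by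
        have : (K : ℝ) < nt := lt_of_le_of_lt hKler hrnt
        exact_mod_cast this
      set m : ℕ := nt - K - 1 with hmdef
      have hmnt : m + K + 1 = nt := by omega
      have hmR : (m : ℝ) = (nt : ℝ) - K - 1 := by
        have h : ((m:ℝ)) + K + 1 = nt := by exact_mod_cast hmnt
        linarith
      rw [← hKr] at hbud' ⊢
      set S : Finset ℕ := (Finset.range nt).filter (fun n => 1 - r/(nt:ℝ) < β n) with hSdef
      have hlow : ∀ a b : ℕ, a ≤ b → b ∈ S → a ∈ S := by
        intro a b hab hb
        rw [hSdef, Finset.mem_filter] at hb ⊢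
        obtain ⟨hb1, hb2⟩ := hb
        have hbnt := Finset.mem_range.mp hb1
        exact ⟨Finset.mem_range.mpr (by omega),
          lt_of_lt_of_le hb2 (hβmono a b hab hbnt)⟩
      have hSr : S = Finset.range S.card := lower_eq_range S hlow
      set p := S.card with hpdef
      have hyS : y = ∑ n ∈ S,
          (T : ℝ) * max (min (r / (nt : ℝ) - 1 + β n) (r / (nt : ℝ))) 0 := by
        rw [hy']
        symm
        apply Finset.sum_subset (Finset.filter_subset _ _)
        intro x hx hxs
        have hxb : β x ≤ 1 - r/(nt:ℝ) := by
          by_contra hc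
          exact hxs (Finset.mem_filter.mpr ⟨hx, by push_neg at hc; exact hc⟩)
        have hmin : min (r / (nt:ℝ) - 1 + β x) (r / (nt:ℝ)) ≤ 0 :=
          le_trans (min_le_left _ _) (by linarith)
        rw [max_eq_right hmin]
        ring
      rcases le_or_gt p m with hpm | hpm
      · -- few active indices: each term ≤ T ρ
        have hbound : y ≤ (p : ℝ) * ((T:ℝ) * (r/(nt:ℝ))) := by
          rw [hyS]
          calc ∑ n ∈ S, (T : ℝ) * max (min (r / (nt : ℝ) - 1 + β n) (r / (nt : ℝ))) 0
              ≤ ∑ _n ∈ S, (T:ℝ) * (r/(nt:ℝ)) := by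
                apply Finset.sum_le_sum
                intro n _
                exact mul_le_mul_of_nonneg_left (max_le (min_le_right _ _) hρ0) hT0
            _ = (p : ℝ) * ((T:ℝ) * (r/(nt:ℝ))) := by
                rw [Finset.sum_const, nsmul_eq_mul]
        have hple : (p : ℝ) ≤ (m : ℝ) := by exact_mod_cast hpm
        have hTρ : 0 ≤ (T:ℝ) * (r/(nt:ℝ)) := by positivity
        have hmval : (m:ℝ) * ((T:ℝ) * (r/(nt:ℝ)))
            = (T:ℝ)/(nt:ℝ) * (r * ((nt:ℝ) - K - 1)) := by
          rw [hmR]; field_simp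
        have hmax0 : 0 ≤ (T:ℝ)/(nt:ℝ) * max ((nt:ℝ) * K - r * ((nt:ℝ)-1)) 0 := by
          positivity
        have h2 : (p:ℝ) * ((T:ℝ) * (r/(nt:ℝ))) ≤ (m:ℝ) * ((T:ℝ) * (r/(nt:ℝ))) :=
          mul_le_mul_of_nonneg_right hple hTρ
        have hexp : (T:ℝ)/(nt:ℝ) * (r * ((nt:ℝ) - (K:ℝ) - 1) +
            max ((nt:ℝ) * (K:ℝ) - r * ((nt:ℝ)-1)) 0)
            = (T:ℝ)/(nt:ℝ) * (r * ((nt:ℝ) - (K:ℝ) - 1))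
              + (T:ℝ)/(nt:ℝ) * max ((nt:ℝ) * (K:ℝ) - r * ((nt:ℝ)-1)) 0 := by ring
        linarith [hbound, h2, hmval, hmax0, hexp]
      · -- many active indices: dual certificate with λ = 1/c
        set c : ℝ := (nt:ℝ) + (nr:ℝ) - 2*(K:ℝ) - 1 with hcdef
        have hKnt' : (K:ℝ) + 1 ≤ (nt:ℝ) := by exact_mod_cast hKnt
        have hntr : (nt:ℝ) ≤ (nr:ℝ) := by exact_mod_cast hnr
        have hc1 : (1:ℝ) ≤ c := by rw [hcdef]; linarith
        have hc0 : (0:ℝ) < c := by linarith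
        have hterm : ∀ n ∈ S,
            (T : ℝ) * max (min (r / (nt : ℝ) - 1 + β n) (r / (nt : ℝ))) 0
            ≤ (T:ℝ) * (r/(nt:ℝ) - min (((nr:ℝ)-(nt:ℝ)+2*(n:ℝ)+1)/c) 1)
              + ((T:ℝ)/c) * (((nr:ℝ)-(nt:ℝ)+2*(n:ℝ)+1) * β n) := by
          intro n hn
          have hn' := hn
          rw [hSdef] at hn'
          have hn2 : 1 - r/(nt:ℝ) < β n := (Finset.mem_filter.mp hn').2
          have hγ0 : 0 ≤ ((nr:ℝ)-(nt:ℝ)+2*(n:ℝ)+1)/c := by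
            have := hcn0 n
            positivity
          have hp := perterm (r/(nt:ℝ)) (((nr:ℝ)-(nt:ℝ)+2*(n:ℝ)+1)/c) (β n)
            hρ0 hρ1 hγ0 (le_of_lt hn2)
          calc (T : ℝ) * max (min (r / (nt : ℝ) - 1 + β n) (r / (nt : ℝ))) 0
              ≤ (T:ℝ) * (r/(nt:ℝ) - min (((nr:ℝ)-(nt:ℝ)+2*(n:ℝ)+1)/c) 1
                + (((nr:ℝ)-(nt:ℝ)+2*(n:ℝ)+1)/c) * β n) :=
                mul_le_mul_of_nonneg_left hp hT0
            _ = (T:ℝ) * (r/(nt:ℝ) - min (((nr:ℝ)-(nt:ℝ)+2*(n:ℝ)+1)/c) 1)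
                + ((T:ℝ)/c) * (((nr:ℝ)-(nt:ℝ)+2*(n:ℝ)+1) * β n) := by
                field_simp
        have hbudS : ∑ n ∈ S, ((nr:ℝ)-(nt:ℝ)+2*(n:ℝ)+1) * β n
            ≤ ((nt : ℝ) - (K : ℝ)) * ((nr : ℝ) - (K : ℝ)) +
            (r - (K : ℝ)) *
              (((nt : ℝ) - (K : ℝ) - 1) * ((nr : ℝ) - (K : ℝ) - 1) -
                ((nt : ℝ) - (K : ℝ)) * ((nr : ℝ) - (K : ℝ))) := by
          refine le_trans ?_ hbud'
          apply Finset.sum_le_sum_of_subset_of_nonneg (Finset.filter_subset _ _)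
          intro n _ _
          exact mul_nonneg (le_trans zero_le_one (hcn0 n)) (hβnn n)
        -- compute the "intercept" sum over S = range p
        have hmlep : m ≤ p := le_of_lt hpm
        have hsplit : ∑ n ∈ Finset.range p,
              (T:ℝ) * (r/(nt:ℝ) - min (((nr:ℝ)-(nt:ℝ)+2*(n:ℝ)+1)/c) 1)
            = (m:ℝ) * ((T:ℝ) * (r/(nt:ℝ)))
              - ((T:ℝ)/c) * ((m:ℝ) * ((nr:ℝ)-(nt:ℝ)+(m:ℝ)))
              + ((p:ℝ)-(m:ℝ)) * ((T:ℝ) * (r/(nt:ℝ) - 1)) := by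
          rw [Finset.range_eq_Ico, ← Finset.sum_Ico_consecutive _ (Nat.zero_le m) hmlep]
          have h1 : ∀ n ∈ Finset.Ico 0 m,
              (T:ℝ) * (r/(nt:ℝ) - min (((nr:ℝ)-(nt:ℝ)+2*(n:ℝ)+1)/c) 1)
              = (T:ℝ) * (r/(nt:ℝ)) - ((T:ℝ)/c) * ((nr:ℝ)-(nt:ℝ)+2*(n:ℝ)+1) := by
            intro n hn
            have hnm : n < m := (Finset.mem_Ico.mp hn).2
            have hnm' : (n:ℝ) + 1 ≤ (m:ℝ) := by exact_mod_cast hnm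
            have hle : ((nr:ℝ)-(nt:ℝ)+2*(n:ℝ)+1) ≤ c := by
              rw [hcdef]; rw [hmR] at hnm'; linarith
            rw [min_eq_left ((div_le_one hc0).mpr hle)]
            field_simp
          have h2 : ∀ n ∈ Finset.Ico m p,
              (T:ℝ) * (r/(nt:ℝ) - min (((nr:ℝ)-(nt:ℝ)+2*(n:ℝ)+1)/c) 1)
              = (T:ℝ) * (r/(nt:ℝ) - 1) := by
            intro n hn
            have hnm : m ≤ n := (Finset.mem_Ico.mp hn).1
            have hnm' : (m:ℝ) ≤ (n:ℝ) := by exact_mod_cast hnm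
            have hle : c ≤ ((nr:ℝ)-(nt:ℝ)+2*(n:ℝ)+1) := by
              rw [hcdef]; rw [hmR] at hnm'; linarith
            rw [min_eq_right ((one_le_div hc0).mpr hle)]
          rw [Finset.sum_congr rfl h1, Finset.sum_congr rfl h2]
          rw [Finset.sum_sub_distrib, Finset.sum_const, Finset.sum_const]
          rw [← Finset.range_eq_Ico, Finset.card_range, Nat.card_Ico]
          rw [← Finset.mul_sum, Finset.sum_congr rfl
            (fun n _ => rfl), gauss_sum ((nr:ℝ)-(nt:ℝ)) m]
          have hcard : ((p - m : ℕ) : ℝ) = (p:ℝ) - (m:ℝ) := by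
            rw [Nat.cast_sub hmlep]
          rw [nsmul_eq_mul, nsmul_eq_mul, hcard]
          try ring
        have hchain : y ≤ (m:ℝ) * ((T:ℝ) * (r/(nt:ℝ)))
              - ((T:ℝ)/c) * ((m:ℝ) * ((nr:ℝ)-(nt:ℝ)+(m:ℝ)))
              + ((p:ℝ)-(m:ℝ)) * ((T:ℝ) * (r/(nt:ℝ) - 1))
              + ((T:ℝ)/c) * (((nt : ℝ) - (K : ℝ)) * ((nr : ℝ) - (K : ℝ)) +
                (r - (K : ℝ)) *
                  (((nt : ℝ) - (K : ℝ) - 1) * ((nr : ℝ) - (K : ℝ) - 1) -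
                    ((nt : ℝ) - (K : ℝ)) * ((nr : ℝ) - (K : ℝ)))) := by
          rw [hyS]
          calc ∑ n ∈ S, (T : ℝ) * max (min (r / (nt : ℝ) - 1 + β n) (r / (nt : ℝ))) 0
              ≤ ∑ n ∈ S, ((T:ℝ) * (r/(nt:ℝ) - min (((nr:ℝ)-(nt:ℝ)+2*(n:ℝ)+1)/c) 1)
                + ((T:ℝ)/c) * (((nr:ℝ)-(nt:ℝ)+2*(n:ℝ)+1) * β n)) :=
                Finset.sum_le_sum hterm
            _ = (∑ n ∈ S, (T:ℝ) * (r/(nt:ℝ) - min (((nr:ℝ)-(nt:ℝ)+2*(n:ℝ)+1)/c) 1))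
                + ((T:ℝ)/c) * (∑ n ∈ S, ((nr:ℝ)-(nt:ℝ)+2*(n:ℝ)+1) * β n) := by
                rw [Finset.sum_add_distrib, Finset.mul_sum]
            _ ≤ (∑ n ∈ S, (T:ℝ) * (r/(nt:ℝ) - min (((nr:ℝ)-(nt:ℝ)+2*(n:ℝ)+1)/c) 1))
                + ((T:ℝ)/c) * (((nt : ℝ) - (K : ℝ)) * ((nr : ℝ) - (K : ℝ)) +
                (r - (K : ℝ)) *
                  (((nt : ℝ) - (K : ℝ) - 1) * ((nr : ℝ) - (K : ℝ) - 1) -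
                    ((nt : ℝ) - (K : ℝ)) * ((nr : ℝ) - (K : ℝ)))) := by
                have h0 : (0:ℝ) ≤ (T:ℝ)/c := by positivity
                have h1 := mul_le_mul_of_nonneg_left hbudS h0
                linarith [h1]
            _ = _ := by
                rw [hSr, hsplit]
        -- final arithmetic
        have hDC : (((nt : ℝ) - (K : ℝ)) * ((nr : ℝ) - (K : ℝ)) +
                (r - (K : ℝ)) *
                  (((nt : ℝ) - (K : ℝ) - 1) * ((nr : ℝ) - (K : ℝ) - 1) -
                    ((nt : ℝ) - (K : ℝ)) * ((nr : ℝ) - (K : ℝ))))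
              - (m:ℝ) * ((nr:ℝ)-(nt:ℝ)+(m:ℝ)) = ((K:ℝ) + 1 - r) * c := by
          rw [hcdef, hmR]; ring
        have hcc : ((T:ℝ)/c) * (((K:ℝ) + 1 - r) * c) = (T:ℝ) * ((K:ℝ) + 1 - r) := by
          field_simp
        have hpm1 : (1:ℝ) ≤ (p:ℝ) - (m:ℝ) := by
          have : m + 1 ≤ p := hpm
          have h := (Nat.cast_le (α := ℝ)).mpr this
          push_cast at h
          linarith
        have htail : ((p:ℝ)-(m:ℝ)) * ((T:ℝ) * (r/(nt:ℝ) - 1))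
            ≤ 1 * ((T:ℝ) * (r/(nt:ℝ) - 1)) := by
          have hneg : (T:ℝ) * (r/(nt:ℝ) - 1) ≤ 0 :=
            mul_nonpos_of_nonneg_of_nonpos hT0 (by linarith)
          nlinarith
        have hkey : r/(nt:ℝ) + (K:ℝ) - r = ((nt:ℝ) * (K:ℝ) - r * ((nt:ℝ)-1)) / (nt:ℝ) := by
          field_simp; ring
        have hmaxk : ((nt:ℝ) * (K:ℝ) - r * ((nt:ℝ)-1)) / (nt:ℝ)
            ≤ max ((nt:ℝ) * (K:ℝ) - r * ((nt:ℝ)-1)) 0 / (nt:ℝ) :=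
          (div_le_div_iff_of_pos_right hnt0).mpr (le_max_left _ _)
        calc y ≤ (m:ℝ) * ((T:ℝ) * (r/(nt:ℝ)))
              + ((p:ℝ)-(m:ℝ)) * ((T:ℝ) * (r/(nt:ℝ) - 1))
              + (T:ℝ) * ((K:ℝ) + 1 - r) := by
                have e : ((T:ℝ)/c) * (((nt : ℝ) - (K : ℝ)) * ((nr : ℝ) - (K : ℝ)) +
                    (r - (K : ℝ)) *
                      (((nt : ℝ) - (K : ℝ) - 1) * ((nr : ℝ) - (K : ℝ) - 1) -
                        ((nt : ℝ) - (K : ℝ)) * ((nr : ℝ) - (K : ℝ))))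
                    - ((T:ℝ)/c) * ((m:ℝ) * ((nr:ℝ)-(nt:ℝ)+(m:ℝ)))
                    = (T:ℝ) * ((K:ℝ) + 1 - r) := by
                  rw [← hcc, ← mul_sub, hDC]
                linarith [hchain]
          _ ≤ (m:ℝ) * ((T:ℝ) * (r/(nt:ℝ))) + (T:ℝ) * (r/(nt:ℝ) - 1)
              + (T:ℝ) * ((K:ℝ) + 1 - r) := by linarith [htail]
          _ = (m:ℝ) * ((T:ℝ) * (r/(nt:ℝ)))
              + (T:ℝ) * (((nt:ℝ) * (K:ℝ) - r * ((nt:ℝ)-1)) / (nt:ℝ)) := by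
                rw [← hkey]; ring
          _ ≤ (m:ℝ) * ((T:ℝ) * (r/(nt:ℝ)))
              + (T:ℝ) * (max ((nt:ℝ) * (K:ℝ) - r * ((nt:ℝ)-1)) 0 / (nt:ℝ)) := by
                have := mul_le_mul_of_nonneg_left hmaxk hT0
                linarith
          _ = (T : ℝ) / (nt : ℝ) *
              (r * ((nt : ℝ) - (K : ℝ) - 1) +
                max ((nt : ℝ) * (K : ℝ) - r * ((nt : ℝ) - 1)) 0) := by
                rw [hmR]; field_simp
end

section
/- Let G ∈ ℂ^{κ×κ} be invertible, T ≥ 1, n_t ≥ 1 with κ = n_t T, and for p = 1,...,n_t let G_{|p} denote the first pT columns of G. Then there exists a permutation matrix Π ∈ ℝ^{κ×κ} and, for each p = 1,...,n_t, a matrix U_p ∈ ℂ^{n_t×p} with U_p*U_p = I_p, such that rank((I_T ⊗ U_p*)[GΠ]_{|p}) = pT for all p, where the U_p are nested (U_{p−1} is obtained from U_p by removing a column). -/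
/-!
Take for `U_p` the first `p` standard basis vectors of `ℂ^{n_t}`. Then `(I_T ⊗ U_pᴴ) G` consists
of the rows `(t, r)` of `G` with `r < p`, and once the rows of `G` are listed with `r` as the
major index these are its first `p T` rows. It therefore suffices to permute the columns of an
invertible matrix so that all its leading principal minors are nonzero. By Laplace expansion along
the last row some minor complementary to an entry of that row is nonzero; put that entry's column
last and recurse into the minor.
-/

open Matrix Kronecker

def finProdCommEquiv (m n : ℕ) : Fin (m * n) ≃ Fin (n * m) :=
  finProdFinEquiv.symm.trans ((Equiv.prodComm _ _).trans finProdFinEquiv)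

@[simp]
theorem finProdCommEquiv_finProdFinEquiv {m n : ℕ} (i : Fin m) (j : Fin n) :
    finProdCommEquiv m n (finProdFinEquiv (i, j)) = finProdFinEquiv (j, i) := by
  simp [finProdCommEquiv]

namespace Matrix

variable {R : Type*}

theorem exists_perm_det_submatrix_castLE_ne_zero [CommRing R] :
    ∀ {n : ℕ} (A : Matrix (Fin n) (Fin n) R), A.det ≠ 0 →
      ∃ π : Equiv.Perm (Fin n), ∀ k (hk : k ≤ n),
        (A.submatrix (Fin.castLE hk) (π ∘ Fin.castLE hk)).det ≠ 0
  | 0, A, hA => ⟨1, fun k hk => by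
      obtain rfl := Nat.le_zero.mp hk
      simpa using hA⟩
  | n + 1, A, hA => by
    obtain ⟨j, -, hj⟩ :=
      Finset.exists_ne_zero_of_sum_ne_zero ((det_succ_row A (Fin.last n)).symm.trans_ne hA)
    rw [Fin.succAbove_last] at hj
    obtain ⟨σ, hσ⟩ := exists_perm_det_submatrix_castLE_ne_zero _ (right_ne_zero_of_mul hj)
    -- `π` lists the columns of the nonzero minor in the order `σ`, then the deleted column `j`.
    let π : Equiv.Perm (Fin (n + 1)) :=
      (finSuccEquiv' (Fin.last n)).trans ((Equiv.optionCongr σ).trans (finSuccEquiv' j).symm)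
    have hπ (i : Fin n) : π i.castSucc = j.succAbove (σ i) := by
      simp [π, finSuccEquiv'_last_apply_castSucc, finSuccEquiv'_symm_some]
    refine ⟨π, fun k hk => ?_⟩
    rcases Nat.lt_or_ge k (n + 1) with hkn | hkn
    · convert hσ k (Nat.lt_succ_iff.mp hkn) using 2
      ext a b
      simp [← hπ]
    · obtain rfl := le_antisymm hk hkn
      have hsign : IsUnit (Equiv.Perm.sign π : R) := (Units.isUnit _).map (Int.castRingHom R)
      rwa [show A.submatrix (Fin.castLE hk) (π ∘ Fin.castLE hk) = A.submatrix id π from rfl,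
        det_permute', Ne, hsign.mul_right_eq_zero]

theorem one_submatrix_id_mul [NonAssocSemiring R] {l m o : Type*} [Fintype m] [DecidableEq m]
    (e : l → m) (M : Matrix m o R) : (1 : Matrix m m R).submatrix e id * M = M.submatrix e id :=
  one_submatrix_mul e (Equiv.refl m) M

def firstCoords (R : Type*) [Zero R] [One R] (n p : ℕ) : Matrix (Fin n) (Fin p) R :=
  of fun i j => if (i : ℕ) = j then 1 else 0

theorem firstCoords_eq_submatrix_one [Zero R] [One R] {n p : ℕ} (hp : p ≤ n) :
    firstCoords R n p = (1 : Matrix (Fin n) (Fin n) R).submatrix id (Fin.castLE hp) := by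
  ext i j
  simp [firstCoords, one_apply, Fin.ext_iff]

theorem firstCoords_eq_submatrix_castSucc [Zero R] [One R] (n p : ℕ) :
    firstCoords R n p = (firstCoords R n (p + 1)).submatrix id Fin.castSucc := by
  ext i j
  simp [firstCoords]

theorem conjTranspose_firstCoords_mul_self [Semiring R] [StarRing R] {n p : ℕ} (hp : p ≤ n) :
    (firstCoords R n p)ᴴ * firstCoords R n p = 1 := by
  rw [firstCoords_eq_submatrix_one hp, conjTranspose_submatrix, conjTranspose_one,
    one_submatrix_id_mul, submatrix_submatrix]
  exact submatrix_one _ (Fin.castLE_injective hp)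

theorem one_kronecker_conjTranspose_firstCoords_mul [Semiring R] [StarRing R]
    {m o : Type*} [Fintype m] [DecidableEq m] {n p : ℕ} (hp : p ≤ n)
    (N : Matrix (m × Fin n) o R) :
    ((1 : Matrix m m R) ⊗ₖ (firstCoords R n p)ᴴ) * N =
      N.submatrix (Prod.map id (Fin.castLE hp)) id := by
  rw [firstCoords_eq_submatrix_one hp, conjTranspose_submatrix, conjTranspose_one,
    kroneckerMap_submatrix_right, one_kronecker_one]
  exact one_submatrix_id_mul _ N

/-- `1 ⊗ (firstCoords R nt p)ᴴ` keeps the rows `(t, r)` with `r < p`; in the row order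
`r * T + t` these are the first `T * p` rows. -/
theorem rank_one_kronecker_conjTranspose_firstCoords_mul [CommRing R] [StarRing R]
    {o : Type*} {nt T p : ℕ} (hp : p ≤ nt) (G : Matrix (Fin (nt * T)) o R)
    (c : Fin (T * p) → o) :
    rank (((1 : Matrix (Fin T) (Fin T) R) ⊗ₖ (firstCoords R nt p)ᴴ) *
        G.submatrix (fun q => Fin.cast (Nat.mul_comm T nt) (finProdFinEquiv q)) c) =
      rank (G.submatrix (finCongr (Nat.mul_comm T nt) ∘ finProdCommEquiv nt T ∘
        Fin.castLE ((Nat.mul_le_mul_left T hp).trans_eq (Nat.mul_comm T nt))) c) := by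
  let e : Fin T × Fin p ≃ Fin (T * p) :=
    (Equiv.prodComm _ _).trans (finProdFinEquiv.trans (finCongr (Nat.mul_comm p T)))
  rw [one_kronecker_conjTranspose_firstCoords_mul hp, ← rank_submatrix _ e (Equiv.refl _)]
  congr 1
  ext ⟨t, r⟩ j
  have : Fin.castLE ((Nat.mul_le_mul_left T hp).trans_eq (Nat.mul_comm T nt)) (e (t, r)) =
      finProdFinEquiv (Fin.castLE hp r, t) := by
    ext
    simp [e, finProdFinEquiv]
  simp [this]

end Matrix

/-- For any invertible generator matrix `G ∈ ℂ^{κ×κ}` (`κ = n_t T`) there exist a column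
permutation `Π` and nested matrices `U_p ∈ ℂ^{n_t×p}` with orthonormal columns
(`U_{p-1}` obtained from `U_p` by removing a column) such that
`rank((I_T ⊗ U_p*)[GΠ]_{|p}) = pT` for all `p = 1,...,n_t`, where `[GΠ]_{|p}` denotes the
first `pT` columns of `GΠ` (rows of `G` reindexed as `Fin T × Fin n_t`). -/
theorem stmt19 (nt T : ℕ)
    (G : Matrix (Fin (nt * T)) (Fin (nt * T)) ℂ) (hG : IsUnit G.det) :
    ∃ (π : Equiv.Perm (Fin (nt * T))) (U : (p : ℕ) → Matrix (Fin nt) (Fin p) ℂ),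
      (∀ p, 1 ≤ p → p ≤ nt → (U p)ᴴ * U p = 1) ∧
      (∀ p, p + 1 ≤ nt → ∃ e : Fin p → Fin (p + 1),
        StrictMono e ∧ U p = (U (p + 1)).submatrix id e) ∧
      (∀ p, 1 ≤ p → ∀ hp : p ≤ nt,
        Matrix.rank
          (((1 : Matrix (Fin T) (Fin T) ℂ) ⊗ₖ (U p)ᴴ) *
            (Matrix.of fun (q : Fin T × Fin nt) (j : Fin (T * p)) =>
              G (Fin.cast (Nat.mul_comm T nt) (finProdFinEquiv q))
                (π (Fin.castLE (by rw [Nat.mul_comm nt T]; exact Nat.mul_le_mul le_rfl hp) j))))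
          = p * T) := by
  let rows := (finProdCommEquiv nt T).trans (finCongr (Nat.mul_comm T nt))
  have hA : (G.submatrix rows id).det ≠ 0 := by
    rw [← isUnit_iff_ne_zero, ← isUnit_iff_isUnit_det]
    exact (isUnit_submatrix_equiv rows (.refl _)).2 ((isUnit_iff_isUnit_det G).2 hG)
  obtain ⟨π, hπ⟩ := exists_perm_det_submatrix_castLE_ne_zero _ hA
  refine ⟨π, firstCoords ℂ nt, fun p _ hp => conjTranspose_firstCoords_mul_self hp,
    fun p _ => ⟨Fin.castSucc, Fin.strictMono_castSucc, firstCoords_eq_submatrix_castSucc nt p⟩,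
    fun p _ hp => ?_⟩
  have hk : T * p ≤ nt * T := (Nat.mul_le_mul_left T hp).trans_eq (Nat.mul_comm T nt)
  refine (rank_one_kronecker_conjTranspose_firstCoords_mul hp G (π ∘ Fin.castLE hk)).trans ?_
  calc _ = Fintype.card (Fin (T * p)) :=
        rank_of_isUnit _ ((isUnit_iff_isUnit_det _).2 (hπ _ hk).isUnit)
    _ = p * T := by rw [Fintype.card_fin, Nat.mul_comm]
end
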